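/- arXiv:1403.0079 — 9 statements merged into one kernel-verified Lean document; each statement's English description precedes it below -/
import Mathlib

section
/- Let s ≥ 1, let (σ,P) be a q-positive measure on [0,2π] in density form, and define r(n) = ∫₀^{2π} (cos(nt) + i·sin(nt)) • (P₁₁(t) + P₁₂(t)·j) dσ(t) for n ∈ ℤ. Then r is Hermitian, i.e., r(−n)* = r(n) for every n ∈ ℤ, where * denotes the quaternionic conjugate transpose. -/
noncomputable section

open MeasureTheory Matrix
open scoped ComplexOrder

abbrev Hq : Type := Quaternion ℝ

/-- The image of a complex number in the quaternions via ℂ = ℝ + ℝi. -/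
def Cq (z : ℂ) : Hq := ⟨z.re, z.im, 0, 0⟩

def qj : Hq := ⟨0, 0, 1, 0⟩

/-- cos (n t) + i sin (n t) as a quaternion. -/
def eint (n : ℤ) (t : ℝ) : Hq := ⟨Real.cos (n * t), Real.sin (n * t), 0, 0⟩

/-- Positive semidefiniteness for quaternionic matrices. -/
def QPosSemidef {m : Type*} [Fintype m] (M : Matrix m m Hq) : Prop :=
  M.conjTranspose = M ∧
    ∀ x : m → Hq, ∃ c : ℝ, 0 ≤ c ∧ dotProduct (star x) (M.mulVec x) = (c : Hq)

def qToeplitz {s : ℕ} (r : ℤ → Matrix (Fin s) (Fin s) Hq) (N : ℕ) :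
    Matrix (Fin (N+1) × Fin s) (Fin (N+1) × Fin s) Hq :=
  Matrix.of fun p q => r ((p.1 : ℤ) - (q.1 : ℤ)) p.2 q.2

def IsPosDefSeq {s : ℕ} (r : ℤ → Matrix (Fin s) (Fin s) Hq) : Prop :=
  ∀ N : ℕ, QPosSemidef (qToeplitz r N)

/-- A q-positive measure on [0,2π] in density form. -/
structure QPosDensity (s : ℕ) where
  σ : Measure ℝ
  P11 : ℝ → Matrix (Fin s) (Fin s) ℂ
  P12 : ℝ → Matrix (Fin s) (Fin s) ℂ
  P22 : ℝ → Matrix (Fin s) (Fin s) ℂ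
  finite : IsFiniteMeasure σ
  support : σ (Set.Icc (0:ℝ) (2*Real.pi))ᶜ = 0
  refl : Measure.map (fun t => 2*Real.pi - t) σ = σ
  integrable : ∀ i j, Integrable (fun t => P11 t i j) σ ∧
      Integrable (fun t => P12 t i j) σ ∧ Integrable (fun t => P22 t i j) σ
  posSemidef_ae : ∀ᵐ t ∂σ,
      (Matrix.fromBlocks (P11 t) (P12 t) (P12 t).conjTranspose (P22 t)).PosSemidef
  cond22 : ∀ᵐ t ∂σ, P22 t = (P11 (2*Real.pi - t)).map (starRingEnd ℂ)
  cond12 : ∀ᵐ t ∂σ, P12 t = - (P12 (2*Real.pi - t)).transpose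

/-- The moment of a q-positive density measure, entrywise Bochner integral. -/
def QPosDensity.moment {s : ℕ} (μ : QPosDensity s) (n : ℤ) :
    Matrix (Fin s) (Fin s) Hq :=
  Matrix.of fun i j =>
    ∫ t in Set.Icc (0:ℝ) (2*Real.pi),
      eint n t * (Cq (μ.P11 t i j) + Cq (μ.P12 t i j) * qj) ∂μ.σ

/-! Write `A n = ∫ e^{int} P₁₁ dσ` and `B n = ∫ e^{int} P₁₂ dσ` (complex matrices), so that
`r n = A n + B n j` entrywise. Since `star (a + b j) = conj a - b j` for `a b : ℂ`, we get
`(r (-n))ᴴ = (A (-n))ᴴ - (B (-n))ᵀ j`. Now `(A (-n))ᴴ = A n` because `P₁₁` is Hermitian, and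
`(B (-n))ᵀ = - B n` by substituting `t ↦ 2π - t`, which preserves `σ`, turns `e^{-int}` into
`e^{int}` and, by `P₁₂ t = - (P₁₂ (2π - t))ᵀ`, turns `P₁₂ᵀ` into `-P₁₂`. -/

open scoped Quaternion ComplexConjugate

theorem star_coeComplex_add_mul_qj (a b : ℂ) :
    star ((a : ℍ) + b * qj) = ((conj a : ℂ) : ℍ) + ((-b : ℂ) : ℍ) * qj := by
  ext <;> simp <;> simp [qj]

def Quaternion.coeComplexCLM : ℂ →L[ℝ] ℍ :=
  Quaternion.ofComplex.toLinearMap.toContinuousLinearMap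

section Integral

variable {α : Type*} [MeasurableSpace α] {μ : Measure α} {f g : α → ℂ}

theorem MeasureTheory.Integrable.coeComplex (hf : Integrable f μ) :
    Integrable (fun x => (f x : ℍ)) μ :=
  Quaternion.coeComplexCLM.integrable_comp hf

theorem integral_coeComplex (hf : Integrable f μ) :
    ∫ x, (f x : ℍ) ∂μ = ((∫ x, f x ∂μ : ℂ) : ℍ) :=
  Quaternion.coeComplexCLM.integral_comp_comm hf

theorem integral_coeComplex_add_mul_qj (hf : Integrable f μ) (hg : Integrable g μ) :
    ∫ x, ((f x : ℍ) + g x * qj) ∂μ = ((∫ x, f x ∂μ : ℂ) : ℍ) + ((∫ x, g x ∂μ : ℂ) : ℍ) * qj := by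
  rw [integral_add hf.coeComplex (hg.coeComplex.mul_const qj),
    integral_mul_const_of_integrable hg.coeComplex, integral_coeComplex hf, integral_coeComplex hg]

end Integral

theorem integral_comp_sub_left_of_map_eq {E : Type*} [NormedAddCommGroup E] [NormedSpace ℝ E]
    {σ : Measure ℝ} {c : ℝ} (h : σ.map (fun t => c - t) = σ) (g : ℝ → E) :
    ∫ t, g (c - t) ∂σ = ∫ t, g t ∂σ := by
  conv_rhs => rw [← h]
  exact ((Homeomorph.subLeft c).measurableEmbedding.integral_map g).symm

theorem eint_eq_coe_cexp (n : ℤ) (t : ℝ) : eint n t = (Complex.exp (n * t * Complex.I) : ℍ) := by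
  ext <;> simp [eint, Complex.exp_re, Complex.exp_im]

def cexpMoment (σ : Measure ℝ) (f : ℝ → ℂ) (n : ℤ) : ℂ :=
  ∫ t : ℝ, Complex.exp (n * t * Complex.I) * f t ∂σ

section CexpMoment

variable {σ : Measure ℝ}

theorem MeasureTheory.Integrable.cexp_mul {f : ℝ → ℂ} (hf : Integrable f σ) (n : ℤ) :
    Integrable (fun t : ℝ => Complex.exp (n * t * Complex.I) * f t) σ :=
  hf.bdd_mul (c := 1) (by fun_prop) (ae_of_all _ fun t => by simp [Complex.norm_exp])

theorem cexpMoment_congr_ae {f g : ℝ → ℂ} (h : f =ᵐ[σ] g) (n : ℤ) :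
    cexpMoment σ f n = cexpMoment σ g n :=
  integral_congr_ae (h.mono fun t ht => by simp only [ht])

theorem cexpMoment_neg (f : ℝ → ℂ) (n : ℤ) :
    cexpMoment σ (fun t => -f t) n = -cexpMoment σ f n := by
  simp only [cexpMoment, mul_neg, integral_neg]

theorem conj_cexpMoment (f : ℝ → ℂ) (n : ℤ) :
    conj (cexpMoment σ f (-n)) = cexpMoment σ (fun t => conj (f t)) n := by
  simp only [cexpMoment, ← integral_conj, map_mul, ← Complex.exp_conj]
  congr with t
  simp

theorem cexpMoment_comp_two_pi_sub (h : σ.map (fun t => 2 * Real.pi - t) = σ) (f : ℝ → ℂ)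
    (n : ℤ) : cexpMoment σ (fun t => f (2 * Real.pi - t)) (-n) = cexpMoment σ f n := by
  rw [cexpMoment, cexpMoment, ← integral_comp_sub_left_of_map_eq h]
  congr with t
  rw [sub_sub_cancel]
  congr 1
  exact Complex.exp_eq_exp_iff_exists_int.2 ⟨-n, by push_cast; ring⟩

end CexpMoment

namespace QPosDensity

variable {s : ℕ} (μ : QPosDensity s)

theorem restrict_Icc_eq_self : μ.σ.restrict (Set.Icc 0 (2 * Real.pi)) = μ.σ :=
  Measure.restrict_eq_self_of_ae_mem (ae_iff.2 μ.support)

theorem moment_apply (n : ℤ) (i j : Fin s) :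
    μ.moment n i j =
      (cexpMoment μ.σ (μ.P11 · i j) n : ℍ) + (cexpMoment μ.σ (μ.P12 · i j) n : ℍ) * qj := by
  rw [moment, of_apply, restrict_Icc_eq_self, cexpMoment, cexpMoment,
    ← integral_coeComplex_add_mul_qj ((μ.integrable i j).1.cexp_mul n)
      ((μ.integrable i j).2.1.cexp_mul n)]
  congr 1
  funext t
  rw [eint_eq_coe_cexp, mul_add, ← mul_assoc, Quaternion.coeComplex_mul,
    Quaternion.coeComplex_mul]
  rfl

theorem isHermitian_P11_ae : ∀ᵐ t ∂μ.σ, (μ.P11 t).IsHermitian :=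
  μ.posSemidef_ae.mono fun _ ht => (isHermitian_fromBlocks_iff.1 ht.isHermitian).1

theorem conj_cexpMoment_P11 (n : ℤ) (i j : Fin s) :
    conj (cexpMoment μ.σ (μ.P11 · j i) (-n)) = cexpMoment μ.σ (μ.P11 · i j) n := by
  rw [conj_cexpMoment]
  exact cexpMoment_congr_ae (μ.isHermitian_P11_ae.mono fun _ ht => ht.apply i j) n

theorem cexpMoment_P12_neg (n : ℤ) (i j : Fin s) :
    cexpMoment μ.σ (μ.P12 · j i) (-n) = -cexpMoment μ.σ (μ.P12 · i j) n := calc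
  _ = cexpMoment μ.σ (fun t => -μ.P12 (2 * Real.pi - t) i j) (-n) :=
    cexpMoment_congr_ae (μ.cond12.mono fun t ht => by simp [ht]) _
  _ = _ := by rw [cexpMoment_neg, cexpMoment_comp_two_pi_sub μ.refl (μ.P12 · i j)]

end QPosDensity

theorem qPosDensity_moment_hermitian_general {s : ℕ} (μ : QPosDensity s)
    (r : ℤ → Matrix (Fin s) (Fin s) Hq) (hr : ∀ n : ℤ, r n = μ.moment n) :
    ∀ n : ℤ, (r (-n)).conjTranspose = r n := by
  intro n
  ext i j : 1
  rw [conjTranspose_apply, hr, hr, μ.moment_apply, μ.moment_apply, star_coeComplex_add_mul_qj,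
    μ.conj_cexpMoment_P11, μ.cexpMoment_P12_neg, neg_neg]

/-- the moments of a q-positive measure form a Hermitian sequence. -/
theorem qPosDensity_moment_hermitian {s : ℕ} (hs : 1 ≤ s) (μ : QPosDensity s)
    (r : ℤ → Matrix (Fin s) (Fin s) Hq) (hr : ∀ n : ℤ, r n = μ.moment n) :
    ∀ n : ℤ, (r (-n)).conjTranspose = r n :=
  qPosDensity_moment_hermitian_general μ r hr
end
end

section
/- (Carathéodory extension theorem over the quaternions.) Let s ≥ 1, N ≥ 0, and let r : {−N,…,N} → ℍ^{s×s} be such that the block Toeplitz matrix T_N = (r(j−ℓ))_{j,ℓ=0}^{N} ∈ ℍ^{(N+1)s×(N+1)s} is positive semidefinite. Then there exists a positive definite function r̃ : ℤ → ℍ^{s×s} such that r̃(n) = r(n) for all n with |n| ≤ N. -/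
noncomputable section

open MeasureTheory Matrix
open scoped ComplexOrder

/-! Extend one step at a time. Split the indices of `T_{M+1}` as `{0}`, `{1, …, M}`, `{M+1}`:
both 2×2 principal block submatrices are copies of `T_M`, and only the corner `r (-(M+1))`
is unknown. Writing `T_M = [[C, D], [Dᴴ, r 0]]`, positivity forces every column of `D` into the
range of `C` (for a Hermitian operator the range is the orthogonal complement of the kernel), so
`D = C K`. With the corner `B K`, where `B` is the top row of `T_M = [[r 0, B], [Bᴴ, C]]`, the
form of `T_{M+1}` at `(x₁, x₂, x₃)` is the sum of the forms of `T_M` at `(x₁, x₂ + K x₃)` and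
`(-K x₃, x₃)`. The extensions of all orders are compatible, so they glue to a single
positive definite function. -/

theorem eq_zero_of_forall_nonneg_mul_add {a b : ℝ} (h : ∀ t, 0 ≤ t * a + b) : a = 0 := by
  by_contra ha
  have := h (-(|b| + 1) / a)
  rw [div_mul_cancel₀ _ ha] at this
  linarith [le_abs_self b]

theorem eq_of_le_of_forall_natAbs_le_succ {α : Type*} {R : ℕ → ℤ → α} {N : ℕ}
    (hR : ∀ k n, n.natAbs ≤ N + k → R (k + 1) n = R k n) {k k' : ℕ} (hk : k ≤ k') {n : ℤ}
    (hn : n.natAbs ≤ N + k) : R k' n = R k n := by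
  induction k', hk using Nat.le_induction with
  | base => rfl
  | succ k' hk ih => rw [hR k' n (by omega), ih]

theorem Fin.eq_zero_or_eq_succ_castSucc_or_eq_last {M : ℕ} (p : Fin (M + 2)) :
    p = 0 ∨ (∃ j : Fin M, p = j.castSucc.succ) ∨ p = Fin.last (M + 1) := by
  rcases Fin.eq_zero_or_eq_succ p with rfl | ⟨p, rfl⟩
  · exact Or.inl rfl
  rcases Fin.eq_castSucc_or_eq_last p with ⟨j, rfl⟩ | rfl
  · exact Or.inr (Or.inl ⟨j, rfl⟩)
  · exact Or.inr (Or.inr (Fin.succ_last M))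

theorem Quaternion.re_sum {ι : Type*} (s : Finset ι) (f : ι → Hq) :
    (∑ i ∈ s, f i).re = ∑ i ∈ s, (f i).re :=
  map_sum (QuaternionAlgebra.reₗ (R := ℝ) (c₁ := -1) (c₂ := 0) (c₃ := -1)) f s

section Matrix

variable {l m n : Type*} [Fintype l] [Fintype m] [Fintype n]

theorem star_sumElim_dotProduct_fromBlocks_mulVec {α : Type*} [NonUnitalNonAssocSemiring α]
    [StarAddMonoid α] (A : Matrix m m α) (B : Matrix m n α) (C : Matrix n m α)
    (D : Matrix n n α) (x : m → α) (y : n → α) :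
    star (Sum.elim x y) ⬝ᵥ (fromBlocks A B C D *ᵥ Sum.elim x y) =
      star x ⬝ᵥ (A *ᵥ x) + star x ⬝ᵥ (B *ᵥ y) + star y ⬝ᵥ (C *ᵥ x) + star y ⬝ᵥ (D *ᵥ y) := by
  simp only [fromBlocks_mulVec, Function.star_sumElim, Sum.elim_comp_inl, Sum.elim_comp_inr,
    sumElim_dotProduct_sumElim, dotProduct_add, add_assoc]

theorem star_dotProduct_conjTranspose_mulVec {α : Type*} [NonUnitalSemiring α] [StarRing α]
    (K : Matrix m n α) (x : n → α) (w : m → α) :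
    star x ⬝ᵥ (Kᴴ *ᵥ w) = star (K *ᵥ x) ⬝ᵥ w := by
  rw [dotProduct_mulVec, star_mulVec]

theorem PiLp.inner_eq_re_dotProduct (x y : PiLp 2 (fun _ : n => Hq)) :
    inner ℝ x y = (star x.ofLp ⬝ᵥ y.ofLp).re := by
  rw [PiLp.inner_apply, dotProduct, Quaternion.re_sum]
  refine Finset.sum_congr rfl fun i _ => ?_
  simp only [Quaternion.inner_def, Quaternion.re_mul, Pi.star_apply, Quaternion.re_star,
    Quaternion.imI_star, Quaternion.imJ_star, Quaternion.imK_star]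
  ring

theorem exists_mulVec_eq_of_re_dotProduct_eq_zero {C : Matrix n n Hq} (hC : Cᴴ = C)
    {d : n → Hq} (hd : ∀ y, C *ᵥ y = 0 → (star y ⬝ᵥ d).re = 0) : ∃ k, C *ᵥ k = d := by
  let T : PiLp 2 (fun _ : n => Hq) →ₗ[ℝ] PiLp 2 (fun _ : n => Hq) :=
    { toFun x := WithLp.toLp 2 (C *ᵥ x.ofLp)
      map_add' x y := by simp [mulVec_add]
      map_smul' t x := by simp [mulVec_smul] }
  have hT : T.IsSymmetric := fun x y => by
    simp only [T, LinearMap.coe_mk, AddHom.coe_mk, PiLp.inner_eq_re_dotProduct]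
    rw [star_mulVec, ← dotProduct_mulVec, hC]
  have hrange : LinearMap.range T = (LinearMap.ker T)ᗮ := by
    rw [← hT.orthogonal_range, Submodule.orthogonal_orthogonal]
  have hd' : WithLp.toLp 2 d ∈ LinearMap.range T := by
    rw [hrange, Submodule.mem_orthogonal]
    intro u hu
    rw [PiLp.inner_eq_re_dotProduct]
    exact hd u.ofLp (congrArg WithLp.ofLp hu)
  obtain ⟨k, hk⟩ := hd'
  exact ⟨k.ofLp, congrArg WithLp.ofLp hk⟩

theorem star_dotProduct_mulVec_eq_coe_re {M : Matrix n n Hq} (hM : Mᴴ = M) (x : n → Hq) :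
    star x ⬝ᵥ (M *ᵥ x) = ((star x ⬝ᵥ (M *ᵥ x)).re : Hq) := by
  rw [← Quaternion.star_eq_self]
  conv_rhs => rw [star_dotProduct]
  rw [star_mulVec, ← dotProduct_mulVec, hM]

theorem qPosSemidef_iff_re_nonneg {M : Matrix n n Hq} :
    QPosSemidef M ↔ Mᴴ = M ∧ ∀ x, 0 ≤ (star x ⬝ᵥ (M *ᵥ x)).re := by
  refine ⟨fun ⟨hM, h⟩ => ⟨hM, fun x => ?_⟩,
    fun ⟨hM, h⟩ => ⟨hM, fun x => ⟨_, h x, star_dotProduct_mulVec_eq_coe_re hM x⟩⟩⟩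
  obtain ⟨c, hc, hx⟩ := h x
  rwa [hx, Quaternion.re_coe]

theorem QPosSemidef.conjTranspose_mul_mul {M : Matrix m m Hq} (hM : QPosSemidef M)
    (P : Matrix m n Hq) : QPosSemidef (Pᴴ * M * P) := by
  rw [qPosSemidef_iff_re_nonneg] at hM ⊢
  refine ⟨by rw [conjTranspose_mul, conjTranspose_mul, conjTranspose_conjTranspose, hM.1,
    Matrix.mul_assoc], fun x => ?_⟩
  rw [← mulVec_mulVec, ← mulVec_mulVec, dotProduct_mulVec, ← star_mulVec]
  exact hM.2 _

theorem QPosSemidef.submatrix {M : Matrix m m Hq} (hM : QPosSemidef M) (e : n → m) :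
    QPosSemidef (M.submatrix e e) := by
  classical
  convert hM.conjTranspose_mul_mul ((1 : Matrix m m Hq).submatrix id e) using 1
  refine Matrix.ext fun i j => ?_
  simp [Matrix.mul_apply, Matrix.one_apply]

theorem QPosSemidef.exists_eq_mul_of_fromBlocks {C : Matrix m m Hq} {D : Matrix m n Hq}
    {E : Matrix n n Hq} (h : QPosSemidef (fromBlocks C D Dᴴ E)) :
    ∃ K : Matrix m n Hq, D = C * K := by
  classical
  rw [qPosSemidef_iff_re_nonneg, fromBlocks_conjTranspose, conjTranspose_conjTranspose] at h
  have hC : Cᴴ = C := (fromBlocks_inj.1 h.1).1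
  have hcol : ∀ j, ∃ k, C *ᵥ k = D.col j := fun j =>
    exists_mulVec_eq_of_re_dotProduct_eq_zero hC fun y hy => by
      -- since `C y = 0`, the form at `(t • y, e_j)` is affine in `t`
      have key : ∀ t : ℝ, 0 ≤ t * (2 * (star y ⬝ᵥ D.col j).re) + (E j j).re := fun t => by
        have := h.2 (Sum.elim (t • y) (Pi.single j 1))
        rw [star_sumElim_dotProduct_fromBlocks_mulVec] at this
        have hDy : (Dᴴ *ᵥ y) j = star (star y ⬝ᵥ D.col j) := star_dotProduct _ _
        have hty : star (t • y) = t • star y := funext fun i => Quaternion.star_smul t (y i)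
        simp only [mulVec_smul, hy, smul_zero, dotProduct_zero, zero_add, hty, smul_dotProduct,
          dotProduct_smul, mulVec_single_one, Pi.star_single, star_one, single_dotProduct,
          one_mul, hDy, col_apply, Quaternion.re_add, Quaternion.re_smul, Quaternion.re_star,
          smul_eq_mul] at this
        linarith
      linarith [eq_zero_of_forall_nonneg_mul_add key]
  choose k hk using hcol
  exact ⟨of fun i j => k j i, Matrix.ext fun i j => (congrFun (hk j) i).symm⟩

theorem QPosSemidef.fromBlocks_completion {A : Matrix l l Hq} {B : Matrix l m Hq}
    {C : Matrix m m Hq} {K : Matrix m n Hq} {E : Matrix n n Hq}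
    (h₁ : QPosSemidef (fromBlocks A B Bᴴ C))
    (h₂ : QPosSemidef (fromBlocks C (C * K) (C * K)ᴴ E)) :
    QPosSemidef (fromBlocks A (fromCols B (B * K)) (fromCols B (B * K))ᴴ
      (fromBlocks C (C * K) (C * K)ᴴ E)) := by
  rw [qPosSemidef_iff_re_nonneg] at h₁ h₂ ⊢
  obtain ⟨hA, -, -, hC⟩ :=
    fromBlocks_inj.1 <| (fromBlocks_conjTranspose A B Bᴴ C).symm.trans h₁.1
  refine ⟨by rw [fromBlocks_conjTranspose, conjTranspose_conjTranspose, hA, h₂.1], fun x => ?_⟩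
  obtain ⟨x₁, x₂, x₃, rfl⟩ : ∃ x₁ x₂ x₃, x = Sum.elim x₁ (Sum.elim x₂ x₃) :=
    ⟨x ∘ Sum.inl, x ∘ Sum.inr ∘ Sum.inl, x ∘ Sum.inr ∘ Sum.inr, by ext (i | i | i) <;> rfl⟩
  have hsplit := congrArg (fun q : Hq => q.re) <| show
      star (Sum.elim x₁ (Sum.elim x₂ x₃)) ⬝ᵥ (fromBlocks A (fromCols B (B * K))
        (fromCols B (B * K))ᴴ (fromBlocks C (C * K) (C * K)ᴴ E) *ᵥ Sum.elim x₁ (Sum.elim x₂ x₃)) =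
      star (Sum.elim x₁ (x₂ + K *ᵥ x₃)) ⬝ᵥ
          (fromBlocks A B Bᴴ C *ᵥ Sum.elim x₁ (x₂ + K *ᵥ x₃)) +
        star (Sum.elim (-(K *ᵥ x₃)) x₃) ⬝ᵥ
          (fromBlocks C (C * K) (C * K)ᴴ E *ᵥ Sum.elim (-(K *ᵥ x₃)) x₃) by
    rw [star_sumElim_dotProduct_fromBlocks_mulVec, star_sumElim_dotProduct_fromBlocks_mulVec,
      star_sumElim_dotProduct_fromBlocks_mulVec, star_sumElim_dotProduct_fromBlocks_mulVec]
    simp only [fromCols_mulVec_sumElim, conjTranspose_fromCols_eq_fromRows_conjTranspose,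
      fromRows_mulVec, Function.star_sumElim, sumElim_dotProduct_sumElim, conjTranspose_mul, hC,
      ← mulVec_mulVec, star_dotProduct_conjTranspose_mulVec, star_add, star_neg, mulVec_add,
      mulVec_neg, dotProduct_add, add_dotProduct, neg_dotProduct, dotProduct_neg]
    abel
  simp only [Quaternion.re_add] at hsplit
  rw [hsplit]
  exact add_nonneg (h₁.2 _) (h₂.2 _)

end Matrix

section Toeplitz

variable {s : ℕ} (r : ℤ → Matrix (Fin s) (Fin s) Hq)

def qToeplitzCore (M : ℕ) : Matrix (Fin M × Fin s) (Fin M × Fin s) Hq :=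
  of fun p q => r (p.1 - q.1) p.2 q.2

def qToeplitzTopRow (M : ℕ) : Matrix (Fin s) (Fin M × Fin s) Hq :=
  of fun i q => r (-(q.1 + 1)) i q.2

def qToeplitzRightCol (M : ℕ) : Matrix (Fin M × Fin s) (Fin s) Hq :=
  of fun p j => r (p.1 - M) p.2 j

def cornerExtension (M : ℕ) (Y : Matrix (Fin s) (Fin s) Hq) : ℤ → Matrix (Fin s) (Fin s) Hq :=
  fun n => if n = M + 1 then Yᴴ else if n = -(M + 1) then Y else r n

variable {r}

def qToeplitzSplit (M : ℕ) : Fin (M + 2) × Fin s → Fin s ⊕ ((Fin M × Fin s) ⊕ Fin s) :=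
  fun p => Fin.cases (Sum.inl p.2)
    (Fin.lastCases (Sum.inr (Sum.inr p.2)) fun j => Sum.inr (Sum.inl (j, p.2))) p.1

@[simp] theorem qToeplitzSplit_zero (M : ℕ) (i : Fin s) :
    qToeplitzSplit M (0, i) = Sum.inl i := rfl

@[simp] theorem qToeplitzSplit_last (M : ℕ) (i : Fin s) :
    qToeplitzSplit M (Fin.last (M + 1), i) = Sum.inr (Sum.inr i) := by
  simp [qToeplitzSplit, ← Fin.succ_last]

@[simp] theorem qToeplitzSplit_succ_castSucc {M : ℕ} (j : Fin M) (i : Fin s) :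
    qToeplitzSplit M (j.castSucc.succ, i) = Sum.inr (Sum.inl (j, i)) := by
  simp [qToeplitzSplit]

theorem qToeplitz_congr {r' : ℤ → Matrix (Fin s) (Fin s) Hq} {M : ℕ}
    (h : ∀ n : ℤ, n.natAbs ≤ M → r n = r' n) : qToeplitz r M = qToeplitz r' M := by
  refine Matrix.ext fun p q => ?_
  simp only [qToeplitz, of_apply]
  rw [h _ (by omega)]

theorem QPosSemidef.of_qToeplitz_of_le {M K : ℕ} (h : QPosSemidef (qToeplitz r M))
    (hK : K ≤ M) : QPosSemidef (qToeplitz r K) :=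
  h.submatrix (Prod.map (Fin.castLE (by omega)) id)

theorem QPosSemidef.star_apply_of_qToeplitz {M : ℕ} (h : QPosSemidef (qToeplitz r M)) {n : ℤ}
    (hn : n.natAbs ≤ M) (i j : Fin s) : star (r n j i) = r (-n) i j := by
  obtain ⟨p, q, hpq⟩ : ∃ p q : Fin (M + 1), (q : ℤ) - p = n := by
    rcases le_total 0 n with h0 | h0
    · exact ⟨0, ⟨n.toNat, by omega⟩, by simp only [Fin.val_zero]; omega⟩
    · exact ⟨⟨(-n).toNat, by omega⟩, 0, by simp only [Fin.val_zero]; omega⟩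
  simpa [qToeplitz, ← hpq] using congrFun₂ h.1 (p, i) (q, j)

theorem qToeplitz_submatrix_head {M : ℕ}
    (hr : ∀ n : ℤ, n.natAbs ≤ M → ∀ i j, star (r n j i) = r (-n) i j) :
    (qToeplitz r M).submatrix (Sum.elim (fun i => (0, i)) (Prod.map Fin.succ id))
        (Sum.elim (fun i => (0, i)) (Prod.map Fin.succ id)) =
      fromBlocks (r 0) (qToeplitzTopRow r M) (qToeplitzTopRow r M)ᴴ (qToeplitzCore r M) := by
  refine Matrix.ext fun p q => ?_
  rcases p with i | ⟨p, i⟩ <;> rcases q with j | ⟨q, j⟩ <;>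
  simp (disch := omega) [qToeplitz, qToeplitzTopRow, qToeplitzCore, hr]

theorem qToeplitz_submatrix_last {M : ℕ}
    (hr : ∀ n : ℤ, n.natAbs ≤ M → ∀ i j, star (r n j i) = r (-n) i j) :
    (qToeplitz r M).submatrix (Sum.elim (Prod.map Fin.castSucc id) (fun j => (Fin.last M, j)))
        (Sum.elim (Prod.map Fin.castSucc id) (fun j => (Fin.last M, j))) =
      fromBlocks (qToeplitzCore r M) (qToeplitzRightCol r M) (qToeplitzRightCol r M)ᴴ (r 0) := by
  refine Matrix.ext fun p q => ?_
  rcases p with ⟨p, i⟩ | i <;> rcases q with ⟨q, j⟩ | j <;>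
  simp (disch := omega) [qToeplitz, qToeplitzCore, qToeplitzRightCol, hr]

theorem qToeplitz_cornerExtension {M : ℕ}
    (hr : ∀ n : ℤ, n.natAbs ≤ M → ∀ i j, star (r n j i) = r (-n) i j)
    (Y : Matrix (Fin s) (Fin s) Hq) :
    qToeplitz (cornerExtension r M Y) (M + 1) =
      (fromBlocks (r 0) (fromCols (qToeplitzTopRow r M) Y) (fromCols (qToeplitzTopRow r M) Y)ᴴ
        (fromBlocks (qToeplitzCore r M) (qToeplitzRightCol r M) (qToeplitzRightCol r M)ᴴ
          (r 0))).submatrix (qToeplitzSplit M) (qToeplitzSplit M) := by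
  refine Matrix.ext fun ⟨p, i⟩ ⟨q, j⟩ => ?_
  obtain rfl | ⟨p, rfl⟩ | rfl := Fin.eq_zero_or_eq_succ_castSucc_or_eq_last p <;>
  obtain rfl | ⟨q, rfl⟩ | rfl := Fin.eq_zero_or_eq_succ_castSucc_or_eq_last q <;>
  simp (disch := omega) [qToeplitz, cornerExtension, qToeplitzTopRow, qToeplitzRightCol,
    qToeplitzCore, if_neg, hr]

theorem cornerExtension_of_natAbs_le {M : ℕ} (Y : Matrix (Fin s) (Fin s) Hq) {n : ℤ}
    (hn : n.natAbs ≤ M) : cornerExtension r M Y n = r n := by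
  rw [cornerExtension, if_neg (by omega), if_neg (by omega)]

theorem QPosSemidef.exists_qToeplitz_succ {M : ℕ} (h : QPosSemidef (qToeplitz r M)) :
    ∃ r' : ℤ → Matrix (Fin s) (Fin s) Hq,
      (∀ n : ℤ, n.natAbs ≤ M → r' n = r n) ∧ QPosSemidef (qToeplitz r' (M + 1)) := by
  have hr := fun n => h.star_apply_of_qToeplitz (n := n)
  have h₁ := h.submatrix (Sum.elim (fun i => (0, i)) (Prod.map Fin.succ id))
  have h₂ := h.submatrix (Sum.elim (Prod.map Fin.castSucc id) (fun j => (Fin.last M, j)))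
  rw [qToeplitz_submatrix_head hr] at h₁
  rw [qToeplitz_submatrix_last hr] at h₂
  obtain ⟨K, hK⟩ := h₂.exists_eq_mul_of_fromBlocks
  rw [hK] at h₂
  refine ⟨cornerExtension r M (qToeplitzTopRow r M * K),
    fun n => cornerExtension_of_natAbs_le _, ?_⟩
  rw [qToeplitz_cornerExtension hr, hK]
  exact (h₁.fromBlocks_completion h₂).submatrix _

theorem QPosSemidef.exists_qToeplitz_seq {N : ℕ} (h : QPosSemidef (qToeplitz r N)) :
    ∃ R : ℕ → ℤ → Matrix (Fin s) (Fin s) Hq, R 0 = r ∧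
      (∀ k, QPosSemidef (qToeplitz (R k) (N + k))) ∧
      ∀ k n, n.natAbs ≤ N + k → R (k + 1) n = R k n := by
  choose! extend hextend using fun (M : ℕ) (r : ℤ → Matrix (Fin s) (Fin s) Hq)
    (h : QPosSemidef (qToeplitz r M)) => h.exists_qToeplitz_succ
  let R : ℕ → ℤ → Matrix (Fin s) (Fin s) Hq := fun k => Nat.rec r (fun k f => extend (N + k) f) k
  have hR : ∀ k, QPosSemidef (qToeplitz (R k) (N + k)) := by
    intro k
    induction k with
    | zero => exact h
    | succ k ih => exact (hextend _ _ ih).2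
  exact ⟨R, rfl, hR, fun k n hn => (hextend _ _ (hR k)).1 n hn⟩

end Toeplitz

theorem quaternionic_caratheodory_extension_general {s N : ℕ}
    (r : ℤ → Matrix (Fin s) (Fin s) Hq)
    (hpos : QPosSemidef (qToeplitz r N)) :
    ∃ rt : ℤ → Matrix (Fin s) (Fin s) Hq,
      IsPosDefSeq rt ∧ ∀ n : ℤ, n.natAbs ≤ N → rt n = r n := by
  obtain ⟨R, hR0, hRpos, hRsucc⟩ := hpos.exists_qToeplitz_seq
  refine ⟨fun n => R n.natAbs n, fun K => ?_, fun n hn => ?_⟩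
  · rw [qToeplitz_congr (r' := R K) fun n hn =>
      (eq_of_le_of_forall_natAbs_le_succ hRsucc hn (by omega)).symm]
    exact (hRpos K).of_qToeplitz_of_le (by omega)
  · rw [← hR0]
    exact eq_of_le_of_forall_natAbs_le_succ hRsucc (Nat.zero_le _) (by omega)

/-- Carathéodory extension theorem over the quaternions. -/
theorem quaternionic_caratheodory_extension {s N : ℕ} (hs : 1 ≤ s)
    (r : ℤ → Matrix (Fin s) (Fin s) Hq)
    (hpos : QPosSemidef (qToeplitz r N)) :
    ∃ rt : ℤ → Matrix (Fin s) (Fin s) Hq,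
      IsPosDefSeq rt ∧ ∀ n : ℤ, n.natAbs ≤ N → rt n = r n :=
  quaternionic_caratheodory_extension_general r hpos
end
end

section
/- (Douglas-type lemma over the quaternions.) Let A ∈ ℍ^{t×s} and B ∈ ℍ^{u×s}. Then B*B − A*A is positive semidefinite if and only if there exists G ∈ ℍ^{t×u} such that A = G·B (matrix product) and ‖G *ᵥ (B *ᵥ x)‖ ≤ ‖B *ᵥ x‖ for every x ∈ ℍ^s. Moreover, B*B = A*A if and only if there exists G ∈ ℍ^{t×u} with A = G·B and ‖G *ᵥ (B *ᵥ x)‖ = ‖B *ᵥ x‖ for every x ∈ ℍ^s. -/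
noncomputable section

open MeasureTheory Matrix
open scoped ComplexOrder

/-- Euclidean norm of a quaternionic vector. -/
def qVecNorm {m : Type*} [Fintype m] (v : m → Hq) : ℝ :=
  Real.sqrt (∑ i, ‖v i‖ ^ 2)


/-! The quadratic form of `Bᴴ B - Aᴴ A` at `x` is the real number `‖B x‖² - ‖A x‖²`, so
`Bᴴ B - Aᴴ A ⪰ 0` says `‖A x‖ ≤ ‖B x‖` for all `x`, and (by polarization, which works for
Hermitian quaternionic matrices since `a + a⋆ = 2 Re a`) `Bᴴ B = Aᴴ A` says `‖A x‖ = ‖B x‖`.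
Either condition gives `ker B ⊆ ker A`, and over a division ring this is what it takes to write
`A = G B`: acting on columns, matrices are `ℍᵐᵒᵖ`-linear maps, `A` factors through the range of
`B`, and a linear map on that range extends to all of `ℍᵘ`. Then `G (B x) = A x`. -/

namespace LinearMap

variable {K V W U : Type*} [DivisionRing K] [AddCommGroup V] [Module K V] [AddCommGroup W]
  [Module K W] [AddCommGroup U] [Module K U]

theorem exists_comp_eq_of_ker_le (g : V →ₗ[K] W) (f : V →ₗ[K] U) (hker : ker g ≤ ker f) :
    ∃ φ : W →ₗ[K] U, φ ∘ₗ g = f := by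
  obtain ⟨ψ, hψ⟩ := ((ker g).liftQ g le_rfl).exists_leftInverse_of_injective
    (Submodule.ker_liftQ_eq_bot _ _ _ le_rfl)
  refine ⟨(ker g).liftQ f hker ∘ₗ ψ, LinearMap.ext fun x => ?_⟩
  have hx := congr($hψ (Submodule.Quotient.mk x))
  simp only [comp_apply, Submodule.liftQ_apply, id_apply] at hx
  simp [hx]

end LinearMap

namespace Matrix

variable {K l m n : Type*} [DivisionRing K] [Fintype m] [DecidableEq m] [Fintype n]

theorem exists_mul_eq_of_mulVec_eq_zero {A : Matrix l n K} {B : Matrix m n K}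
    (hker : ∀ x, B *ᵥ x = 0 → A *ᵥ x = 0) : ∃ G : Matrix l m K, G * B = A := by
  obtain ⟨φ, hφ⟩ := LinearMap.exists_comp_eq_of_ker_le (mulVecBilin K Kᵐᵒᵖ B)
    (mulVecBilin K Kᵐᵒᵖ A) fun x => hker x
  set G : Matrix l m K := (of fun j => φ (Pi.single j 1))ᵀ
  have hG : ∀ y, G *ᵥ y = φ y := by
    intro y
    conv_rhs => rw [← Finset.univ_sum_single y]
    simp only [mulVec_eq_sum, G, transpose_transpose, map_sum]
    refine Finset.sum_congr rfl fun i _ => ?_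
    change _ • φ _ = _
    rw [← map_smul, ← Pi.single_smul, op_smul_eq_mul, one_mul]
  classical
  refine ⟨G, ext_of_mulVec_single fun j => ?_⟩
  rw [← mulVec_mulVec, hG]
  exact LinearMap.congr_fun hφ _

end Matrix

section Quaternion

open Quaternion

variable {l m n : Type*} [Fintype l] [Fintype m]

theorem qVecNorm_nonneg (v : m → Hq) : 0 ≤ qVecNorm v := Real.sqrt_nonneg _

theorem sq_qVecNorm (v : m → Hq) : qVecNorm v ^ 2 = ∑ i, ‖v i‖ ^ 2 :=
  Real.sq_sqrt (by positivity)

theorem qVecNorm_eq_zero_iff {v : m → Hq} : qVecNorm v = 0 ↔ v = 0 := by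
  rw [← sq_eq_zero_iff, sq_qVecNorm, Finset.sum_eq_zero_iff_of_nonneg fun i _ => by positivity]
  simp [funext_iff]

theorem star_dotProduct_self_eq_qVecNorm_sq (v : m → Hq) :
    star v ⬝ᵥ v = ((qVecNorm v ^ 2 : ℝ) : Hq) := by
  simp only [dotProduct, Pi.star_apply, star_mul_self, normSq_eq_norm_mul_self, sq_qVecNorm,
    ← sq]
  exact (map_sum (algebraMap ℝ Hq) _ _).symm

theorem isHermitian_conjTranspose_mul_self_sub (A : Matrix l n Hq) (B : Matrix m n Hq) :
    (Bᴴ * B - Aᴴ * A).IsHermitian :=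
  (isHermitian_conjTranspose_mul_self B).sub (isHermitian_conjTranspose_mul_self A)

variable [Fintype n]

theorem star_dotProduct_conjTranspose_mul_mulVec (M : Matrix m n Hq) (x : n → Hq) :
    star x ⬝ᵥ (Mᴴ * M) *ᵥ x = ((qVecNorm (M *ᵥ x) ^ 2 : ℝ) : Hq) := by
  rw [← mulVec_mulVec, dotProduct_mulVec, ← star_mulVec, star_dotProduct_self_eq_qVecNorm_sq]

theorem Matrix.IsHermitian.eq_zero_of_star_dotProduct_mulVec_self_eq_zero [DecidableEq n]
    {M : Matrix n n Hq} (hM : M.IsHermitian) (h : ∀ x, star x ⬝ᵥ M *ᵥ x = 0) : M = 0 := by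
  have hre : ∀ x y, (star x ⬝ᵥ M *ᵥ y).re = 0 := by
    intro x y
    have hxy := h (x + y)
    rw [star_add, mulVec_add, dotProduct_add, add_dotProduct, add_dotProduct, h x, h y] at hxy
    have hsym : star y ⬝ᵥ M *ᵥ x = star (star x ⬝ᵥ M *ᵥ y) := by
      rw [← star_dotProduct_star, star_star, star_mulVec, hM.eq, dotProduct_mulVec]
    rw [hsym, zero_add, add_zero, star_add_self', ← coe_zero, coe_inj] at hxy
    linarith
  refine Matrix.ext fun i j => ?_
  -- for `y = eⱼ (M i j)⋆` the form `x⋆ M y` at `x = eᵢ` is the real number `|M i j|²`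
  have hij := hre (Pi.single i 1) (Pi.single j (star (M i j)))
  rw [← Pi.single_star, star_one, mulVec_single, single_dotProduct, one_mul, Pi.smul_apply,
    op_smul_eq_mul, col_apply, self_mul_star, re_coe, normSq_eq_zero] at hij
  exact hij

theorem star_dotProduct_conjTranspose_mul_sub_mulVec (A : Matrix l n Hq) (B : Matrix m n Hq)
    (x : n → Hq) :
    star x ⬝ᵥ (Bᴴ * B - Aᴴ * A) *ᵥ x =
      ((qVecNorm (B *ᵥ x) ^ 2 - qVecNorm (A *ᵥ x) ^ 2 : ℝ) : Hq) := by
  rw [sub_mulVec, dotProduct_sub, star_dotProduct_conjTranspose_mul_mulVec,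
    star_dotProduct_conjTranspose_mul_mulVec, coe_sub]

theorem qPosSemidef_conjTranspose_mul_self_sub_iff (A : Matrix l n Hq) (B : Matrix m n Hq) :
    QPosSemidef (Bᴴ * B - Aᴴ * A) ↔ ∀ x, qVecNorm (A *ᵥ x) ≤ qVecNorm (B *ᵥ x) := by
  simp only [QPosSemidef, (isHermitian_conjTranspose_mul_self_sub A B).eq, true_and,
    star_dotProduct_conjTranspose_mul_sub_mulVec, coe_inj, exists_eq_right', sub_nonneg]
  exact forall_congr' fun x =>
    pow_le_pow_iff_left₀ (qVecNorm_nonneg _) (qVecNorm_nonneg _) two_ne_zero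

theorem conjTranspose_mul_self_eq_iff [DecidableEq n] (A : Matrix l n Hq) (B : Matrix m n Hq) :
    Bᴴ * B = Aᴴ * A ↔ ∀ x, qVecNorm (A *ᵥ x) = qVecNorm (B *ᵥ x) := by
  rw [← sub_eq_zero]
  constructor
  · intro h x
    have hx := star_dotProduct_conjTranspose_mul_sub_mulVec A B x
    rw [h, zero_mulVec, dotProduct_zero, ← coe_zero, coe_inj, eq_comm, sub_eq_zero] at hx
    exact (pow_left_inj₀ (qVecNorm_nonneg _) (qVecNorm_nonneg _) two_ne_zero).mp hx.symm
  · intro h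
    refine (isHermitian_conjTranspose_mul_self_sub A B)
      |>.eq_zero_of_star_dotProduct_mulVec_self_eq_zero fun x => ?_
    rw [star_dotProduct_conjTranspose_mul_sub_mulVec, h x, sub_self, coe_zero]

theorem exists_eq_mul_and_forall_qVecNorm_iff [DecidableEq m] {P : ℝ → ℝ → Prop}
    (hP : ∀ a, 0 ≤ a → P a 0 → a = 0) (A : Matrix l n Hq) (B : Matrix m n Hq) :
    (∃ G : Matrix l m Hq, A = G * B ∧ ∀ x, P (qVecNorm (G *ᵥ (B *ᵥ x))) (qVecNorm (B *ᵥ x))) ↔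
      ∀ x, P (qVecNorm (A *ᵥ x)) (qVecNorm (B *ᵥ x)) := by
  constructor
  · rintro ⟨G, rfl, hG⟩ x
    simpa only [mulVec_mulVec] using hG x
  · intro h
    have hker : ∀ x, B *ᵥ x = 0 → A *ᵥ x = 0 := fun x hx =>
      qVecNorm_eq_zero_iff.mp <| hP _ (qVecNorm_nonneg _) <| by
        simpa only [hx, qVecNorm_eq_zero_iff.mpr rfl] using h x
    obtain ⟨G, rfl⟩ := exists_mul_eq_of_mulVec_eq_zero hker
    exact ⟨G, rfl, by simpa only [mulVec_mulVec] using h⟩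

end Quaternion

/-- Douglas-type lemma over the quaternions. -/
theorem quaternionic_douglas {t u s : ℕ}
    (A : Matrix (Fin t) (Fin s) Hq) (B : Matrix (Fin u) (Fin s) Hq) :
    (QPosSemidef (B.conjTranspose * B - A.conjTranspose * A) ↔
      ∃ G : Matrix (Fin t) (Fin u) Hq, A = G * B ∧
        ∀ x : Fin s → Hq, qVecNorm (G.mulVec (B.mulVec x)) ≤ qVecNorm (B.mulVec x)) ∧
    (B.conjTranspose * B = A.conjTranspose * A ↔
      ∃ G : Matrix (Fin t) (Fin u) Hq, A = G * B ∧
        ∀ x : Fin s → Hq, qVecNorm (G.mulVec (B.mulVec x)) = qVecNorm (B.mulVec x)) :=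
  ⟨(qPosSemidef_conjTranspose_mul_self_sub_iff A B).trans
      (exists_eq_mul_and_forall_qVecNorm_iff (fun _ ha h => le_antisymm h ha) A B).symm,
    (conjTranspose_mul_self_eq_iff A B).trans
      (exists_eq_mul_and_forall_qVecNorm_iff (fun _ _ h => h) A B).symm⟩
end
end

section
/- (Block positivity criterion over the quaternions.) Let A ∈ ℍ^{t×t}, C ∈ ℍ^{u×u}, B ∈ ℍ^{t×u}, and let K = [[A, B],[B*, C]] ∈ ℍ^{(t+u)×(t+u)}. Then K is positive semidefinite if and only if the following hold: (i) A and C are positive semidefinite; (ii) there exist positive semidefinite matrices S_A ∈ ℍ^{t×t} and S_C ∈ ℍ^{u×u} with S_A·S_A = A and S_C·S_C = C, and a matrix G ∈ ℍ^{t×u} with ‖G *ᵥ y‖ ≤ ‖y‖ for all y ∈ ℍ^u, such that B = S_A·G·S_C. -/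
noncomputable section

open MeasureTheory Matrix
open scoped ComplexOrder

/-
The complex adjoint `Z + W j ↦ [[Z, W], [-W̄, Z̄]]` is an injective real *-homomorphism from
quaternionic to complex matrices which preserves and reflects positive semidefiniteness, so the
criterion is a statement about complex matrices. There, writing `K = Lᴴ L` and splitting the
columns `L = [X Y]` gives `A = XᴴX`, `B = XᴴY`, `C = YᴴY`. With `S_A = √A` and the pseudo-inverse
`A^{+1/2}`, the matrix `G = A^{+1/2} B C^{+1/2} = (X A^{+1/2})ᴴ (Y C^{+1/2})` is a product of two
partial isometries, hence a contraction, and `S_A G S_C = B`. All of `√A`, `A^{+1/2}`, ... are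
continuous functional calculus images of `A`; the image of the complex adjoint is a closed
*-subalgebra, so they come from quaternionic matrices. Conversely
`K = D [[1, G], [Gᴴ, 1]] Dᴴ` with `D = diag(S_A, S_C)`, and the middle factor is positive
semidefinite because its Schur complement is `1 - GᴴG`.
-/

-- Since `(√x)⁻¹ = 0` at `x = 0`, for `A ⪰ 0` these are the pseudo-inverse of `√A` and the
-- orthogonal projection onto the range of `A`.
local notation "invSqrt" => cfc fun x : ℝ => (√x)⁻¹
local notation "supportProj" => cfc fun x : ℝ => √x * (√x)⁻¹

namespace Matrix

variable {𝕜 : Type*} [RCLike 𝕜] {k m n : Type*} [Fintype k] [Fintype m] [Fintype n]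

section Contraction

lemma posSemidef_one_sub_conjTranspose_mul_self_mul [DecidableEq n] [DecidableEq m]
    {M : Matrix k m 𝕜} {N : Matrix m n 𝕜}
    (hM : (1 - Mᴴ * M).PosSemidef) (hN : (1 - Nᴴ * N).PosSemidef) :
    (1 - (M * N)ᴴ * (M * N)).PosSemidef := by
  have h : 1 - (M * N)ᴴ * (M * N) = (1 - Nᴴ * N) + Nᴴ * (1 - Mᴴ * M) * N := by
    simp only [conjTranspose_mul, Matrix.mul_sub, Matrix.sub_mul, Matrix.mul_one,
      Matrix.mul_assoc]
    abel
  rw [h]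
  exact hN.add (hM.conjTranspose_mul_mul_same N)

lemma mul_eq_self_of_conjTranspose_mul_self_mul_eq {X : Matrix k n 𝕜} {P : Matrix n n 𝕜}
    (hP : P.IsHermitian) (h : Xᴴ * X * P = Xᴴ * X) : X * P = X := by
  have h' : P * (Xᴴ * X) = Xᴴ * X := by
    simpa [conjTranspose_mul, hP.eq, Matrix.mul_assoc] using congrArg conjTranspose h
  have hzero : (X - X * P)ᴴ * (X - X * P) = 0 := by
    simp only [conjTranspose_sub, conjTranspose_mul, hP.eq, Matrix.sub_mul, Matrix.mul_sub]
    rw [← Matrix.mul_assoc, h, Matrix.mul_assoc P, h', Matrix.mul_assoc P, ← Matrix.mul_assoc Xᴴ,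
      h, h']
    abel
  exact (sub_eq_zero.mp (conjTranspose_mul_self_eq_zero.mp hzero)).symm

variable {M : Matrix k n 𝕜}

lemma posSemidef_one_sub_conjTranspose_mul_self_of_idempotent [DecidableEq n]
    (hM : Mᴴ * M * (Mᴴ * M) = Mᴴ * M) : (1 - Mᴴ * M).PosSemidef := by
  have h : 1 - Mᴴ * M = (1 - Mᴴ * M)ᴴ * (1 - Mᴴ * M) := by
    rw [conjTranspose_sub, conjTranspose_one, conjTranspose_mul, conjTranspose_conjTranspose,
      Matrix.sub_mul, Matrix.mul_sub, Matrix.mul_sub, hM]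
    simp
  rw [h]
  exact posSemidef_conjTranspose_mul_self _

lemma posSemidef_one_sub_mul_conjTranspose_self_of_idempotent [DecidableEq k]
    (hM : Mᴴ * M * (Mᴴ * M) = Mᴴ * M) : (1 - M * Mᴴ).PosSemidef := by
  have hMP : M * (Mᴴ * M) = M :=
    mul_eq_self_of_conjTranspose_mul_self_mul_eq (isHermitian_conjTranspose_mul_self M) hM
  have hM' : Mᴴᴴ * Mᴴ * (Mᴴᴴ * Mᴴ) = Mᴴᴴ * Mᴴ := by
    rw [conjTranspose_conjTranspose, ← Matrix.mul_assoc, Matrix.mul_assoc M Mᴴ M, hMP]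
  simpa using posSemidef_one_sub_conjTranspose_mul_self_of_idempotent hM'

end Contraction

section FunctionalCalculus

open scoped MatrixOrder

variable [DecidableEq n] {A : Matrix n n 𝕜}

lemma cfc_mul_cfc_of_eqOn {f g h : ℝ → ℝ} (hfg : ∀ x ∈ spectrum ℝ A, f x * g x = h x) :
    cfc f A * cfc g A = cfc h A := by
  rw [← cfc_mul f g A (A.finite_real_spectrum.continuousOn f)
    (A.finite_real_spectrum.continuousOn g)]
  exact cfc_congr hfg

lemma isHermitian_cfc (f : ℝ → ℝ) : (cfc f A).IsHermitian := cfc_predicate f A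

lemma posSemidef_cfc_sqrt : (cfc Real.sqrt A).PosSemidef :=
  nonneg_iff_posSemidef.mp (cfc_nonneg fun x _ => Real.sqrt_nonneg x)

lemma supportProj_mul_self : supportProj A * supportProj A = supportProj A :=
  cfc_mul_cfc_of_eqOn fun x _ => by obtain h | h := eq_or_ne (√x) 0 <;> simp [h]

lemma cfc_sqrt_mul_cfc_sqrt (hA : A.PosSemidef) : cfc Real.sqrt A * cfc Real.sqrt A = A := by
  rw [cfc_mul_cfc_of_eqOn (f := Real.sqrt) (g := Real.sqrt) (h := fun x => x) fun x hx =>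
    Real.mul_self_sqrt (spectrum_nonneg_of_nonneg hA.nonneg hx),
    cfc_id' ℝ A hA.isHermitian.isSelfAdjoint]

lemma invSqrt_mul_mul_invSqrt (hA : A.PosSemidef) :
    invSqrt A * A * invSqrt A = supportProj A := by
  calc _ = invSqrt A * cfc (fun x => x) A * invSqrt A := by
        rw [cfc_id' ℝ A hA.isHermitian.isSelfAdjoint]
    _ = cfc (fun x => (√x)⁻¹ * x) A * invSqrt A := by
        rw [cfc_mul_cfc_of_eqOn fun _ _ => rfl]
    _ = _ := cfc_mul_cfc_of_eqOn fun x hx => by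
        have hx0 := spectrum_nonneg_of_nonneg hA.nonneg hx
        obtain h | h := eq_or_ne (√x) 0
        · simp [Real.sqrt_eq_zero hx0 |>.mp h]
        · field_simp
          exact (Real.sq_sqrt hx0).symm

lemma mul_supportProj (hA : A.PosSemidef) : A * supportProj A = A := by
  calc _ = cfc (fun x => x) A * supportProj A := by
        rw [cfc_id' ℝ A hA.isHermitian.isSelfAdjoint]
    _ = cfc (fun x => x) A := cfc_mul_cfc_of_eqOn fun x hx => by
        obtain h | h := eq_or_ne (√x) 0
        · simp [Real.sqrt_eq_zero (spectrum_nonneg_of_nonneg hA.nonneg hx) |>.mp h]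
        · field_simp
    _ = A := cfc_id' ℝ A hA.isHermitian.isSelfAdjoint

end FunctionalCalculus

section Gram

variable [DecidableEq m] [DecidableEq n] (X : Matrix k m 𝕜) (Y : Matrix k n 𝕜)

lemma conjTranspose_mul_self_mul_invSqrt :
    (X * invSqrt (Xᴴ * X))ᴴ * (X * invSqrt (Xᴴ * X)) = supportProj (Xᴴ * X) := by
  rw [conjTranspose_mul, (isHermitian_cfc _).eq, Matrix.mul_assoc, ← Matrix.mul_assoc Xᴴ,
    ← Matrix.mul_assoc, invSqrt_mul_mul_invSqrt (posSemidef_conjTranspose_mul_self X)]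

theorem posSemidef_one_sub_gram_contraction :
    (1 - (invSqrt (Xᴴ * X) * (Xᴴ * Y) * invSqrt (Yᴴ * Y))ᴴ *
      (invSqrt (Xᴴ * X) * (Xᴴ * Y) * invSqrt (Yᴴ * Y))).PosSemidef := by
  have hG : invSqrt (Xᴴ * X) * (Xᴴ * Y) * invSqrt (Yᴴ * Y) =
      (X * invSqrt (Xᴴ * X))ᴴ * (Y * invSqrt (Yᴴ * Y)) := by
    simp only [conjTranspose_mul, (isHermitian_cfc _).eq, Matrix.mul_assoc]
  rw [hG]
  classical
  refine posSemidef_one_sub_conjTranspose_mul_self_mul ?_ ?_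
  · rw [conjTranspose_conjTranspose]
    refine posSemidef_one_sub_mul_conjTranspose_self_of_idempotent ?_
    rw [conjTranspose_mul_self_mul_invSqrt, supportProj_mul_self]
  · refine posSemidef_one_sub_conjTranspose_mul_self_of_idempotent ?_
    rw [conjTranspose_mul_self_mul_invSqrt, supportProj_mul_self]

theorem gram_eq_cfc_sqrt_mul_contraction_mul_cfc_sqrt :
    Xᴴ * Y = cfc Real.sqrt (Xᴴ * X) * (invSqrt (Xᴴ * X) * (Xᴴ * Y) * invSqrt (Yᴴ * Y)) *
      cfc Real.sqrt (Yᴴ * Y) := by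
  have hX : X * supportProj (Xᴴ * X) = X :=
    mul_eq_self_of_conjTranspose_mul_self_mul_eq (isHermitian_cfc _)
      (mul_supportProj (posSemidef_conjTranspose_mul_self X))
  have hY : Y * supportProj (Yᴴ * Y) = Y :=
    mul_eq_self_of_conjTranspose_mul_self_mul_eq (isHermitian_cfc _)
      (mul_supportProj (posSemidef_conjTranspose_mul_self Y))
  have hSA : invSqrt (Xᴴ * X) * cfc Real.sqrt (Xᴴ * X) = supportProj (Xᴴ * X) :=
    cfc_mul_cfc_of_eqOn fun _ _ => mul_comm _ _
  have hSC : invSqrt (Yᴴ * Y) * cfc Real.sqrt (Yᴴ * Y) = supportProj (Yᴴ * Y) :=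
    cfc_mul_cfc_of_eqOn fun _ _ => mul_comm _ _
  calc Xᴴ * Y = (X * supportProj (Xᴴ * X))ᴴ *
        (Y * supportProj (Yᴴ * Y)) := by rw [hX, hY]
    _ = _ := by
        rw [← hSA, ← hSC]
        simp only [conjTranspose_mul, (isHermitian_cfc _).eq, Matrix.mul_assoc]

end Gram

section Blocks

variable [DecidableEq m] [DecidableEq n] {A : Matrix m m 𝕜} {B : Matrix m n 𝕜} {C : Matrix n n 𝕜}

theorem PosSemidef.exists_gram_of_fromBlocks (hK : (fromBlocks A B Bᴴ C).PosSemidef) :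
    ∃ (X : Matrix (m ⊕ n) m 𝕜) (Y : Matrix (m ⊕ n) n 𝕜), A = Xᴴ * X ∧ B = Xᴴ * Y ∧ C = Yᴴ * Y := by
  set L := cfc Real.sqrt (fromBlocks A B Bᴴ C)
  have hL : fromBlocks A B Bᴴ C = Lᴴ * L := by
    rw [(isHermitian_cfc _).eq, cfc_sqrt_mul_cfc_sqrt hK]
  refine ⟨L.toCols₁, L.toCols₂, ?_⟩
  rw [← fromCols_toCols L, conjTranspose_fromCols_eq_fromRows_conjTranspose,
    fromRows_mul_fromCols] at hL
  obtain ⟨hA, hB, -, hC⟩ := fromBlocks_inj.mp hL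
  exact ⟨hA, hB, hC⟩

theorem PosSemidef.fromBlocks_factorization (hK : (fromBlocks A B Bᴴ C).PosSemidef) :
    (1 - (invSqrt A * B * invSqrt C)ᴴ * (invSqrt A * B * invSqrt C)).PosSemidef ∧
      B = cfc Real.sqrt A * (invSqrt A * B * invSqrt C) * cfc Real.sqrt C := by
  obtain ⟨X, Y, rfl, rfl, rfl⟩ := hK.exists_gram_of_fromBlocks
  exact ⟨posSemidef_one_sub_gram_contraction X Y,
    gram_eq_cfc_sqrt_mul_contraction_mul_cfc_sqrt X Y⟩

theorem posSemidef_fromBlocks_mul_contraction_mul {S₁ : Matrix m m 𝕜} {S₂ : Matrix n n 𝕜}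
    {G : Matrix m n 𝕜} (hS₁ : S₁.IsHermitian) (hS₂ : S₂.IsHermitian)
    (hG : (1 - Gᴴ * G).PosSemidef) :
    (fromBlocks (S₁ * S₁) (S₁ * G * S₂) (S₁ * G * S₂)ᴴ (S₂ * S₂)).PosSemidef := by
  have hM : (fromBlocks 1 G Gᴴ 1).PosSemidef := by
    have : Invertible (1 : Matrix m m 𝕜) := invertibleOne
    rw [PosDef.fromBlocks₁₁ G 1 PosDef.one, inv_one, Matrix.mul_one]
    exact hG
  have h := hM.mul_mul_conjTranspose_same (fromBlocks S₁ 0 0 S₂)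
  rw [fromBlocks_conjTranspose, conjTranspose_zero, conjTranspose_zero, hS₁.eq, hS₂.eq,
    fromBlocks_multiply, fromBlocks_multiply] at h
  rw [conjTranspose_mul, conjTranspose_mul, hS₁.eq, hS₂.eq]
  simpa [Matrix.mul_assoc] using h

end Blocks

end Matrix

namespace QuaternionMatrix

/-- The decomposition `x = zPart x + wPart x * j` of `ℍ = ℂ ⊕ ℂ j`. -/
def zPart : Hq →+ ℂ := AddMonoidHom.mk' (fun x => ⟨x.re, x.imI⟩) fun x y => by
  apply Complex.ext <;> simp

def wPart : Hq →+ ℂ := AddMonoidHom.mk' (fun x => ⟨x.imJ, x.imK⟩) fun x y => by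
  apply Complex.ext <;> simp

@[simp] lemma zPart_re (x : Hq) : (zPart x).re = x.re := rfl
@[simp] lemma zPart_im (x : Hq) : (zPart x).im = x.imI := rfl
@[simp] lemma wPart_re (x : Hq) : (wPart x).re = x.imJ := rfl
@[simp] lemma wPart_im (x : Hq) : (wPart x).im = x.imK := rfl

lemma zPart_mul (x y : Hq) :
    zPart (x * y) = zPart x * zPart y - wPart x * starRingEnd ℂ (wPart y) := by
  apply Complex.ext <;> simp [Quaternion.re_mul, Quaternion.imI_mul] <;> ring

lemma wPart_mul (x y : Hq) :
    wPart (x * y) = zPart x * wPart y + wPart x * starRingEnd ℂ (zPart y) := by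
  apply Complex.ext <;> simp [Quaternion.imJ_mul, Quaternion.imK_mul] <;> ring

lemma zPart_star (x : Hq) : zPart (star x) = starRingEnd ℂ (zPart x) := by
  apply Complex.ext <;> simp

lemma wPart_star (x : Hq) : wPart (star x) = -wPart x := by
  apply Complex.ext <;> simp

lemma zPart_coe (r : ℝ) : zPart (r : Hq) = r := by
  apply Complex.ext <;> simp

lemma wPart_coe (r : ℝ) : wPart (r : Hq) = 0 := by
  apply Complex.ext <;> simp

lemma ext_zPart_wPart {x y : Hq} (hz : zPart x = zPart y) (hw : wPart x = wPart y) : x = y := by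
  have h1 := congrArg Complex.re hz
  have h2 := congrArg Complex.im hz
  have h3 := congrArg Complex.re hw
  have h4 := congrArg Complex.im hw
  simp only [zPart_re, zPart_im, wPart_re, wPart_im] at h1 h2 h3 h4
  exact Quaternion.ext _ _ h1 h2 h3 h4

variable {p q r : Type*}

/-- The complex adjoint matrix `[[Z, W], [-conj W, conj Z]]` of `M = Z + W j`. -/
def complexAdjoint (M : Matrix p q Hq) : Matrix (p ⊕ p) (q ⊕ q) ℂ :=
  fromBlocks (M.map zPart) (M.map wPart) (-M.map (starRingEnd ℂ ∘ wPart))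
    (M.map (starRingEnd ℂ ∘ zPart))

lemma complexAdjoint_add (M N : Matrix p q Hq) :
    complexAdjoint (M + N) = complexAdjoint M + complexAdjoint N := by
  ext (i | i) (j | j) <;> simp [complexAdjoint, add_comm]

lemma complexAdjoint_mul [Fintype q] (M : Matrix p q Hq) (N : Matrix q r Hq) :
    complexAdjoint (M * N) = complexAdjoint M * complexAdjoint N := by
  ext (i | i) (j | j) <;>
    simp only [complexAdjoint, mul_apply, Fintype.sum_sum_type, fromBlocks_apply₁₁,
      fromBlocks_apply₁₂, fromBlocks_apply₂₁, fromBlocks_apply₂₂, Matrix.map_apply,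
      Matrix.neg_apply, Function.comp_apply, map_sum, ← Finset.sum_add_distrib,
      ← Finset.sum_neg_distrib] <;>
    refine Finset.sum_congr rfl fun k _ => ?_ <;>
    simp only [zPart_mul, wPart_mul, map_sub, map_add, map_mul, Complex.conj_conj] <;> ring

lemma complexAdjoint_conjTranspose (M : Matrix p q Hq) :
    complexAdjoint Mᴴ = (complexAdjoint M)ᴴ := by
  ext (i | i) (j | j) <;> simp [complexAdjoint, zPart_star, wPart_star]

lemma complexAdjoint_injective : Function.Injective (complexAdjoint (p := p) (q := q)) :=
  fun _ _ h => Matrix.ext fun i j =>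
    ext_zPart_wPart (congrFun (congrFun h (.inl i)) (.inl j))
      (congrFun (congrFun h (.inl i)) (.inr j))

lemma complexAdjoint_algebraMap [Fintype p] [DecidableEq p] (x : ℝ) :
    complexAdjoint (algebraMap ℝ (Matrix p p Hq) x) =
      algebraMap ℝ (Matrix (p ⊕ p) (p ⊕ p) ℂ) x := by
  ext (i | i) (j | j) <;> by_cases h : i = j <;>
    simp [complexAdjoint, algebraMap_matrix_apply, h, zPart_coe, wPart_coe]

section StarAlgHom

variable (p) [Fintype p] [DecidableEq p]

def complexAdjointStarAlgHom : Matrix p p Hq →⋆ₐ[ℝ] Matrix (p ⊕ p) (p ⊕ p) ℂ where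
  toFun := complexAdjoint
  map_one' := by simpa using complexAdjoint_algebraMap (p := p) 1
  map_mul' := complexAdjoint_mul
  map_zero' := by simpa using complexAdjoint_algebraMap (p := p) 0
  map_add' := complexAdjoint_add
  commutes' := complexAdjoint_algebraMap
  map_star' := complexAdjoint_conjTranspose

variable {p}

lemma exists_complexAdjoint_eq_cfc (A : Matrix p p Hq) (f : ℝ → ℝ) :
    ∃ S, complexAdjoint S = cfc f (complexAdjoint A) := by
  have : IsClosed ((complexAdjointStarAlgHom p).range : Set (Matrix (p ⊕ p) (p ⊕ p) ℂ)) :=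
    Submodule.closed_of_finiteDimensional
      (complexAdjointStarAlgHom p).range.toSubalgebra.toSubmodule
  exact cfc_mem (s := (complexAdjointStarAlgHom p).range) f ⟨A, rfl⟩

end StarAlgHom

section Vectors

/-- The first column of `complexAdjoint` of the column matrix `v`. -/
def complexAdjointVec (v : q → Hq) : q ⊕ q → ℂ :=
  Sum.elim (fun i => zPart (v i)) (fun i => -starRingEnd ℂ (wPart (v i)))

lemma complexAdjointVec_surjective : Function.Surjective (complexAdjointVec (q := q)) := by
  intro z
  refine ⟨fun i => ⟨(z (.inl i)).re, (z (.inl i)).im, -(z (.inr i)).re, (z (.inr i)).im⟩, ?_⟩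
  ext (i | i) <;> apply Complex.ext <;> simp [complexAdjointVec, zPart, wPart]

variable [Fintype q]

lemma complexAdjoint_mulVec (M : Matrix p q Hq) (v : q → Hq) :
    complexAdjoint M *ᵥ complexAdjointVec v = complexAdjointVec (M *ᵥ v) := by
  ext (i | i) <;>
    simp only [complexAdjoint, complexAdjointVec, mulVec, dotProduct, Fintype.sum_sum_type,
      fromBlocks_apply₁₁, fromBlocks_apply₁₂, fromBlocks_apply₂₁, fromBlocks_apply₂₂,
      Matrix.map_apply, Matrix.neg_apply, Function.comp_apply, Sum.elim_inl, Sum.elim_inr,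
      map_sum, ← Finset.sum_add_distrib, ← Finset.sum_neg_distrib] <;>
    refine Finset.sum_congr rfl fun k _ => ?_ <;>
    simp only [zPart_mul, wPart_mul, map_add, map_mul, Complex.conj_conj] <;>
    ring

lemma star_complexAdjointVec_dotProduct (v w : q → Hq) :
    star (complexAdjointVec v) ⬝ᵥ complexAdjointVec w = zPart (star v ⬝ᵥ w) := by
  simp only [dotProduct, Pi.star_apply, Fintype.sum_sum_type, complexAdjointVec, Sum.elim_inl,
    Sum.elim_inr, map_sum, ← Finset.sum_add_distrib]
  refine Finset.sum_congr rfl fun k _ => ?_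
  simp only [zPart_mul, zPart_star, wPart_star, RCLike.star_def, map_neg, Complex.conj_conj]
  ring

end Vectors

section PosSemidef

variable [Fintype p]

lemma star_star_dotProduct_mulVec (M : Matrix p p Hq) (x : p → Hq) :
    star (star x ⬝ᵥ M *ᵥ x) = star x ⬝ᵥ Mᴴ *ᵥ x := by
  rw [star_dotProduct, star_star, star_mulVec, dotProduct_mulVec]

theorem qPosSemidef_iff_posSemidef_complexAdjoint {M : Matrix p p Hq} :
    QPosSemidef M ↔ (complexAdjoint M).PosSemidef := by
  rw [posSemidef_iff_dotProduct_mulVec, IsHermitian, ← complexAdjoint_conjTranspose,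
    complexAdjoint_injective.eq_iff, QPosSemidef,
    complexAdjointVec_surjective.forall]
  refine and_congr_right fun hM => forall_congr' fun x => ?_
  rw [complexAdjoint_mulVec, star_complexAdjointVec_dotProduct]
  have hreal : star x ⬝ᵥ M *ᵥ x = ((star x ⬝ᵥ M *ᵥ x).re : Hq) :=
    Quaternion.star_eq_self.mp (by rw [star_star_dotProduct_mulVec, hM])
  constructor
  · rintro ⟨c, hc, h⟩
    rw [h, zPart_coe]
    exact_mod_cast hc
  · intro h
    rw [hreal, zPart_coe] at h
    exact ⟨_, by exact_mod_cast h, hreal⟩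

lemma star_dotProduct_self (v : p → Hq) : star v ⬝ᵥ v = ((qVecNorm v ^ 2 : ℝ) : Hq) := by
  rw [qVecNorm, Real.sq_sqrt (by positivity)]
  simp only [dotProduct, Pi.star_apply, Quaternion.star_mul_self,
    Quaternion.normSq_eq_norm_mul_self, ← sq, ← Quaternion.algebraMap_def, map_sum]

theorem qPosSemidef_one_sub_conjTranspose_mul_self_iff [Fintype q] [DecidableEq q]
    {G : Matrix p q Hq} :
    QPosSemidef (1 - Gᴴ * G) ↔ ∀ y, qVecNorm (G *ᵥ y) ≤ qVecNorm y := by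
  have hform : ∀ y, star y ⬝ᵥ (1 - Gᴴ * G) *ᵥ y =
      ((qVecNorm y ^ 2 - qVecNorm (G *ᵥ y) ^ 2 : ℝ) : Hq) := fun y => by
    rw [sub_mulVec, one_mulVec, dotProduct_sub, ← mulVec_mulVec, dotProduct_mulVec,
      ← star_mulVec, star_dotProduct_self, star_dotProduct_self, Quaternion.coe_sub]
  have hherm : (1 - Gᴴ * G)ᴴ = 1 - Gᴴ * G := by simp
  simp only [QPosSemidef, hherm, true_and, hform, Quaternion.coe_inj]
  refine forall_congr' fun y => ⟨fun ⟨c, hc, h⟩ => ?_, fun h => ?_⟩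
  · rw [← h, sub_nonneg] at hc
    exact (pow_le_pow_iff_left₀ (Real.sqrt_nonneg _) (Real.sqrt_nonneg _) two_ne_zero).mp hc
  · exact ⟨_, sub_nonneg.mpr (pow_le_pow_left₀ (Real.sqrt_nonneg _) h 2), rfl⟩

theorem forall_qVecNorm_mulVec_le_iff [Fintype q] [DecidableEq q] {G : Matrix p q Hq} :
    (∀ y, qVecNorm (G *ᵥ y) ≤ qVecNorm y) ↔
      (1 - (complexAdjoint G)ᴴ * complexAdjoint G).PosSemidef := by
  rw [← qPosSemidef_one_sub_conjTranspose_mul_self_iff, qPosSemidef_iff_posSemidef_complexAdjoint,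
    ← complexAdjoint_conjTranspose, ← complexAdjoint_mul]
  have h := map_sub (complexAdjointStarAlgHom q) 1 (Gᴴ * G)
  rw [map_one] at h
  exact Iff.of_eq (congrArg _ h)

end PosSemidef

lemma complexAdjoint_fromBlocks (A : Matrix p p Hq) (B : Matrix p r Hq) (C : Matrix r p Hq)
    (D : Matrix r r Hq) :
    complexAdjoint (fromBlocks A B C D) =
      (fromBlocks (complexAdjoint A) (complexAdjoint B) (complexAdjoint C)
        (complexAdjoint D)).submatrix (Equiv.sumSumSumComm p r p r)
        (Equiv.sumSumSumComm p r p r) := by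
  ext ((i | i) | (i | i)) ((j | j) | (j | j)) <;> rfl

theorem qPosSemidef_fromBlocks_iff [Fintype p] [Fintype r] {A : Matrix p p Hq}
    {B : Matrix p r Hq} {C : Matrix r r Hq} :
    QPosSemidef (fromBlocks A B Bᴴ C) ↔
      (fromBlocks (complexAdjoint A) (complexAdjoint B) (complexAdjoint B)ᴴ
        (complexAdjoint C)).PosSemidef := by
  rw [qPosSemidef_iff_posSemidef_complexAdjoint, complexAdjoint_fromBlocks,
    complexAdjoint_conjTranspose, posSemidef_submatrix_equiv]

end QuaternionMatrix

open QuaternionMatrix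

/-- block positivity criterion over the quaternions. -/
theorem quaternionic_block_posSemidef {t u : ℕ}
    (A : Matrix (Fin t) (Fin t) Hq) (C : Matrix (Fin u) (Fin u) Hq)
    (B : Matrix (Fin t) (Fin u) Hq) :
    QPosSemidef (Matrix.fromBlocks A B B.conjTranspose C) ↔
      (QPosSemidef A ∧ QPosSemidef C) ∧
      ∃ (SA : Matrix (Fin t) (Fin t) Hq) (SC : Matrix (Fin u) (Fin u) Hq)
        (G : Matrix (Fin t) (Fin u) Hq),
          QPosSemidef SA ∧ QPosSemidef SC ∧ SA * SA = A ∧ SC * SC = C ∧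
          (∀ y : Fin u → Hq, qVecNorm (G.mulVec y) ≤ qVecNorm y) ∧
          B = SA * G * SC := by
  rw [qPosSemidef_fromBlocks_iff]
  constructor
  · intro hK
    have hA : (complexAdjoint A).PosSemidef := hK.submatrix Sum.inl
    have hC : (complexAdjoint C).PosSemidef := hK.submatrix Sum.inr
    obtain ⟨SA, hSA⟩ := exists_complexAdjoint_eq_cfc A Real.sqrt
    obtain ⟨SC, hSC⟩ := exists_complexAdjoint_eq_cfc C Real.sqrt
    obtain ⟨TA, hTA⟩ := exists_complexAdjoint_eq_cfc A fun x => (√x)⁻¹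
    obtain ⟨TC, hTC⟩ := exists_complexAdjoint_eq_cfc C fun x => (√x)⁻¹
    obtain ⟨hG, hB⟩ := hK.fromBlocks_factorization
    refine ⟨⟨?_, ?_⟩, SA, SC, TA * B * TC, ?_⟩
    all_goals simp only [qPosSemidef_iff_posSemidef_complexAdjoint, forall_qVecNorm_mulVec_le_iff,
      ← complexAdjoint_injective.eq_iff, complexAdjoint_mul, hSA, hSC, hTA, hTC]
    exacts [hA, hC, ⟨posSemidef_cfc_sqrt, posSemidef_cfc_sqrt, cfc_sqrt_mul_cfc_sqrt hA,
      cfc_sqrt_mul_cfc_sqrt hC, hG, hB⟩]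
  · rintro ⟨-, SA, SC, G, hSA, hSC, rfl, rfl, hG, rfl⟩
    rw [qPosSemidef_iff_posSemidef_complexAdjoint] at hSA hSC
    rw [forall_qVecNorm_mulVec_le_iff] at hG
    simp only [complexAdjoint_mul]
    exact posSemidef_fromBlocks_mul_contraction_mul hSA.isHermitian hSC.isHermitian hG
end
end

section
/- Let s ≥ 1, κ ≥ 0, and let r : ℤ → ℍ^{s×s} be Hermitian (r(−n) = r(n)* for all n) with at most κ negative squares. Then there exist real constants K > 0 and C > 0 such that ‖r(n)‖ ≤ K·C^{|n|} for all n ∈ ℤ, where ‖·‖ is the entrywise maximum of quaternion norms (equivalently, any fixed matrix norm, up to a change of constants). -/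
noncomputable section

open MeasureTheory Matrix
open scoped ComplexOrder

/-- The Hermitian sequence r has at most κ negative squares: every strictly
negative right ℍ-submodule for a block Toeplitz matrix has quaternionic
dimension at most κ. -/
def HasAtMostNegSquares {s : ℕ} (r : ℤ → Matrix (Fin s) (Fin s) Hq) (κ : ℕ) : Prop :=
  ∀ N : ℕ, ∀ W : Submodule Hqᵐᵒᵖ (Fin (N+1) × Fin s → Hq),
    (∀ x ∈ W, x ≠ 0 →
      (dotProduct (star x) ((qToeplitz r N).mulVec x)).re < 0) →
    Module.finrank Hqᵐᵒᵖ W ≤ κ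

/-!
If the entries of `r` are not exponentially bounded, we pick peaks `ν 0 < ⋯ < ν κ` of
`d ↦ ‖r d‖` greedily, each dominating everything before it by a huge factor. The
`k`-th peak gives the vector `e_(κ-k) + w_k e_(κ-k+ν k)` in the Toeplitz space, where `w_k` is
a small multiple of the largest entry of `r (ν k)` chosen so that the cross term
`2 re (w_k* r (ν k))` equals `-2 t_k`. This makes the diagonal of the Gram matrix of these
`κ + 1` vectors at most `-t_k`, while the choice of peaks makes the off-diagonal entries small
compared with `√(t_k t_l)`. A diagonally dominant negative definite Gram matrix spans a negative
right `ℍ`-submodule of dimension `κ + 1`, which is impossible with at most `κ` negative squares.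
-/

attribute [local instance] Matrix.normedAddCommGroup

theorem Matrix.exists_norm_apply_eq {m n α : Type*} [Fintype m] [Fintype n]
    [NormedAddCommGroup α] (A : Matrix m n α) (hA : 0 < ‖A‖) : ∃ i j, ‖A i j‖ = ‖A‖ := by
  by_contra! h
  exact lt_irrefl _ ((Matrix.norm_lt_iff hA).2 fun i j =>
    (norm_entry_le_entrywise_sup_norm A).lt_of_ne (h i j))

namespace Quaternion

theorem re_le_norm (a : Hq) : a.re ≤ ‖a‖ := by
  simpa [inner_def] using real_inner_le_norm a 1

theorem re_star_mul_mul_le (a b c : Hq) : (star a * b * c).re ≤ ‖a‖ * ‖b‖ * ‖c‖ := by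
  simpa [norm_mul, norm_star] using re_le_norm (star a * b * c)

theorem re_star_mul_coe_mul (a : Hq) (ρ : ℝ) : (star a * ρ * a).re = ρ * ‖a‖ ^ 2 := by
  rw [mul_coe_eq_smul, smul_mul_assoc, star_mul_self, re_smul, re_coe,
    normSq_eq_norm_mul_self, smul_eq_mul, sq]

theorem re_sum_s9 {ι : Type*} (s : Finset ι) (f : ι → Hq) : (∑ i ∈ s, f i).re = ∑ i ∈ s, (f i).re :=
  map_sum (QuaternionAlgebra.reₗ ..) f s

end Quaternion

section Gram

variable {n ι : Type*} [Fintype n]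

def quatGram (T : Matrix n n Hq) (x : ι → n → Hq) : Matrix ι ι Hq :=
  Matrix.of fun k l => star (x k) ⬝ᵥ T *ᵥ x l

theorem star_quatGram {T : Matrix n n Hq} (hT : T.conjTranspose = T)
    (x : ι → n → Hq) (k l : ι) : star (quatGram T x k l) = quatGram T x l k := by
  rw [quatGram, of_apply, of_apply, ← star_dotProduct_star, star_star, star_mulVec,
    ← dotProduct_mulVec, hT]

variable [Fintype ι]

def QNegDef (G : Matrix ι ι Hq) : Prop :=
  ∀ a : ι → Hq, a ≠ 0 → (star a ⬝ᵥ G *ᵥ a).re < 0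

theorem star_sum_dotProduct_mulVec_sum (T : Matrix n n Hq) (x : ι → n → Hq) (a : ι → Hq) :
    star (∑ k, MulOpposite.op (a k) • x k) ⬝ᵥ T *ᵥ (∑ k, MulOpposite.op (a k) • x k) =
      star a ⬝ᵥ quatGram T x *ᵥ a := by
  have hterm : ∀ k l, star (MulOpposite.op (a k) • x k) ⬝ᵥ T *ᵥ (MulOpposite.op (a l) • x l) =
      star (a k) * (quatGram T x k l * a l) := fun k l => by
    simp [quatGram, dotProduct, mulVec, Finset.mul_sum, Finset.sum_mul, mul_assoc]
  simp only [star_sum, mulVec_sum, sum_dotProduct, dotProduct_sum, hterm]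
  rw [Finset.sum_comm]
  simp [dotProduct, mulVec, Finset.mul_sum]

theorem linearIndependent_of_qNegDef_quatGram {T : Matrix n n Hq} {x : ι → n → Hq}
    (h : QNegDef (quatGram T x)) : LinearIndependent Hqᵐᵒᵖ x := by
  refine Fintype.linearIndependent_iff.2 fun c hc => ?_
  by_contra hne
  have := h (fun k => (c k).unop) fun h0 => hne fun k => by simpa using congrFun h0 k
  rw [← star_sum_dotProduct_mulVec_sum] at this
  simp only [MulOpposite.op_unop, hc, star_zero, zero_dotProduct] at this
  exact lt_irrefl _ this

theorem re_dotProduct_mulVec_neg_of_mem_span {T : Matrix n n Hq} {x : ι → n → Hq}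
    (h : QNegDef (quatGram T x)) {y : n → Hq} (hy : y ∈ Submodule.span Hqᵐᵒᵖ (Set.range x))
    (hy0 : y ≠ 0) : (star y ⬝ᵥ T *ᵥ y).re < 0 := by
  obtain ⟨c, rfl⟩ := (Submodule.mem_span_range_iff_exists_fun _).1 hy
  rw [show c = fun k => MulOpposite.op (c k).unop from rfl, star_sum_dotProduct_mulVec_sum]
  refine h _ fun h0 => hy0 ?_
  simp [show c = 0 from funext fun k => by simpa using congrFun h0 k]

end Gram

theorem qNegDef_of_diag_dominant {ι : Type*} [Fintype ι] (G : Matrix ι ι Hq)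
    (u : ι → ℝ) (hu : ∀ k, 0 < u k) (hself : ∀ k, star (G k k) = G k k)
    (hdiag : ∀ k, (G k k).re ≤ -u k ^ 2)
    (hoff : ∀ k l, k ≠ l → 2 * Fintype.card ι * ‖G k l‖ ≤ u k * u l) : QNegDef G := by
  classical
  intro a ha
  obtain ⟨k₀, hk₀⟩ := Function.ne_iff.1 ha
  set c : ℝ := (Fintype.card ι : ℝ)
  have hc : 0 < c := Nat.cast_pos.2 (Fintype.card_pos_iff.2 ⟨k₀⟩)
  set v : ι → ℝ := fun k => u k * ‖a k‖
  have hterm : ∀ k l, (star (a k) * G k l * a l).re ≤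
      (if k = l then -v k ^ 2 else 0) + v k * v l / (2 * c) := by
    intro k l
    have hvv : 0 ≤ v k * v l / (2 * c) := by
      have := (hu k).le; have := (hu l).le; positivity
    split_ifs with hkl
    · subst hkl
      rw [Quaternion.star_eq_self.1 (hself k), Quaternion.re_star_mul_coe_mul]
      nlinarith [hdiag k, sq_nonneg ‖a k‖]
    · calc (star (a k) * G k l * a l).re ≤ ‖a k‖ * ‖G k l‖ * ‖a l‖ :=
            Quaternion.re_star_mul_mul_le _ _ _
        _ ≤ ‖a k‖ * (u k * u l / (2 * c)) * ‖a l‖ := by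
            gcongr
            rw [le_div_iff₀ (by positivity)]
            linarith [hoff k l hkl]
        _ = 0 + v k * v l / (2 * c) := by ring
  have hsq : 0 < ∑ k, v k ^ 2 :=
    Finset.sum_pos' (fun k _ => sq_nonneg _) ⟨k₀, Finset.mem_univ _, by
      have := hu k₀; have := norm_pos_iff.2 hk₀; positivity⟩
  have hcs : (∑ k, v k) ^ 2 ≤ c * ∑ k, v k ^ 2 := sq_sum_le_card_mul_sum_sq
  calc (star a ⬝ᵥ G *ᵥ a).re = ∑ k, ∑ l, (star (a k) * G k l * a l).re := by
        simp [dotProduct, mulVec, Finset.mul_sum, mul_assoc, Quaternion.re_sum_s9]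
    _ ≤ ∑ k, ∑ l, ((if k = l then -v k ^ 2 else 0) + v k * v l / (2 * c)) :=
        Finset.sum_le_sum fun k _ => Finset.sum_le_sum fun l _ => hterm k l
    _ = -∑ k, v k ^ 2 + (∑ k, v k) ^ 2 / (2 * c) := by
        simp [Finset.sum_add_distrib, ← Finset.sum_div, sq, Finset.sum_mul_sum]
    _ < 0 := by
        have : (∑ k, v k) ^ 2 / (2 * c) ≤ (∑ k, v k ^ 2) / 2 := by
          rw [div_le_iff₀ (by positivity)]; nlinarith
        linarith

def negWeight (t : ℝ) (R : Hq) : Hq :=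
  (-t / ‖R‖ ^ 2) • R

theorem norm_negWeight {t : ℝ} (ht : 0 ≤ t) (R : Hq) : ‖negWeight t R‖ = t / ‖R‖ := by
  rcases eq_or_ne R 0 with rfl | hR
  · simp [negWeight]
  · have := norm_pos_iff.2 hR
    rw [negWeight, norm_smul, Real.norm_eq_abs, abs_div, abs_neg, abs_of_nonneg ht,
      abs_of_pos (by positivity)]
    field_simp

theorem re_star_negWeight_mul (t : ℝ) {R : Hq} (hR : R ≠ 0) :
    (star (negWeight t R) * R).re = -t := by
  have := norm_pos_iff.2 hR
  rw [negWeight, Quaternion.star_smul, smul_mul_assoc, Quaternion.star_mul_self, Quaternion.re_smul,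
    Quaternion.re_coe, Quaternion.normSq_eq_norm_mul_self, smul_eq_mul]
  field_simp

section TwoPoint

variable {n : Type*} [Fintype n] [DecidableEq n]

def twoPoint (P Q : n) (w : Hq) : n → Hq :=
  Pi.single P 1 + Pi.single Q w

theorem star_twoPoint_dotProduct_mulVec_twoPoint (T : Matrix n n Hq) (P Q P' Q' : n)
    (w w' : Hq) :
    star (twoPoint P Q w) ⬝ᵥ T *ᵥ twoPoint P' Q' w' =
      T P P' + T P Q' * w' + star w * T Q P' + star w * T Q Q' * w' := by
  simp only [twoPoint, mulVec_add, star_add, add_dotProduct, dotProduct_add, mulVec_single,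
    Pi.star_single, single_dotProduct, star_one, one_mul]
  simp only [Pi.smul_apply, MulOpposite.smul_eq_mul_unop, MulOpposite.unop_op, col_apply,
    mul_one, mul_assoc]
  abel

theorem norm_star_twoPoint_dotProduct_mulVec_twoPoint_le (T : Matrix n n Hq) (P Q P' Q' : n)
    (w w' : Hq) :
    ‖star (twoPoint P Q w) ⬝ᵥ T *ᵥ twoPoint P' Q' w'‖ ≤
      ‖T P P'‖ + ‖T P Q'‖ * ‖w'‖ + ‖w‖ * ‖T Q P'‖ + ‖w‖ * ‖T Q Q'‖ * ‖w'‖ := by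
  rw [star_twoPoint_dotProduct_mulVec_twoPoint]
  refine (norm_add₄_le ..).trans_eq ?_
  simp only [norm_mul, norm_star]

theorem re_star_twoPoint_dotProduct_mulVec_twoPoint_le (T : Matrix n n Hq) (P Q : n) (w : Hq)
    (hPQ : T P Q = star (T Q P)) :
    (star (twoPoint P Q w) ⬝ᵥ T *ᵥ twoPoint P Q w).re ≤
      ‖T P P‖ + 2 * (star w * T Q P).re + ‖w‖ * ‖T Q Q‖ * ‖w‖ := by
  have hsym : (T P Q * w).re = (star w * T Q P).re := by
    rw [hPQ, ← Quaternion.re_star, star_mul, star_star]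
  rw [star_twoPoint_dotProduct_mulVec_twoPoint]
  simp only [Quaternion.re_add, hsym]
  linarith [Quaternion.re_le_norm (T P P), Quaternion.re_star_mul_mul_le w (T Q Q) w]

theorem re_star_twoPoint_negWeight_le (T : Matrix n n Hq) (P Q : n)
    (hPQ : T P Q = star (T Q P)) {t : ℝ} (ht : 0 < t)
    (htR : t ≤ ‖T Q P‖) :
    (star (twoPoint P Q (negWeight t (T Q P))) ⬝ᵥ T *ᵥ twoPoint P Q (negWeight t (T Q P))).re ≤
      ‖T P P‖ + ‖T Q Q‖ - 2 * t := by
  have hR : 0 < ‖T Q P‖ := ht.trans_le htR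
  have hw : ‖negWeight t (T Q P)‖ ≤ 1 := by
    rw [norm_negWeight ht.le, div_le_one hR]; exact htR
  refine (re_star_twoPoint_dotProduct_mulVec_twoPoint_le T P Q _ hPQ).trans ?_
  rw [re_star_negWeight_mul t (norm_pos_iff.1 hR)]
  have : ‖negWeight t (T Q P)‖ * ‖T Q Q‖ * ‖negWeight t (T Q P)‖ ≤ ‖T Q Q‖ := by
    have := norm_nonneg (negWeight t (T Q P))
    have := norm_nonneg (T Q Q)
    nlinarith [mul_le_mul_of_nonneg_left hw (norm_nonneg (T Q Q))]
  linarith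

end TwoPoint

section Peaks

variable {a : ℕ → ℝ}

theorem exists_record (ha : ∀ d, 0 ≤ a d)
    (hgrowth : ∀ K C : ℝ, 0 < K → 0 < C → ∃ d, K * C ^ d < a d) {C : ℝ} (hC : 1 ≤ C)
    (T : ℝ) (B : ℕ) : ∃ ν, B < ν ∧ T ≤ a ν ∧ ∀ d < ν, C * a d ≤ a ν := by
  set K := 1 + |T| + ∑ d ∈ Finset.range (B + 1), a d
  have hsum : 0 ≤ ∑ d ∈ Finset.range (B + 1), a d := Finset.sum_nonneg fun d _ => ha d
  have hK : 0 < K := by positivity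
  have hC0 : 0 < C := one_pos.trans_le hC
  obtain ⟨d₀, hd₀⟩ := hgrowth K C hK hC0
  obtain ⟨ν, hν, hmax⟩ := Finset.exists_max_image (Finset.range (d₀ + 1))
    (fun d => a d * C ^ (d₀ - d)) ⟨d₀, Finset.self_mem_range_succ d₀⟩
  have hνd₀ : ν ≤ d₀ := Nat.lt_succ_iff.1 (Finset.mem_range.1 hν)
  have hmax' : ∀ d ≤ d₀, a d * C ^ (d₀ - d) ≤ a ν * C ^ (d₀ - ν) := fun d hd =>
    hmax d (Finset.mem_range.2 (Nat.lt_succ_of_le hd))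
  have hKν : K < a ν := by
    have h1 := hmax' d₀ le_rfl
    rw [Nat.sub_self, pow_zero, mul_one] at h1
    have h2 : K * C ^ (d₀ - ν) ≤ K * C ^ d₀ := by gcongr; exact Nat.sub_le _ _
    exact lt_of_mul_lt_mul_right (h2.trans_lt (hd₀.trans_le h1)) (by positivity)
  refine ⟨ν, ?_, ?_, fun d hd => ?_⟩
  · by_contra! hB
    have : a ν ≤ ∑ d ∈ Finset.range (B + 1), a d :=
      Finset.single_le_sum (fun d _ => ha d) (Finset.mem_range.2 (Nat.lt_succ_of_le hB))
    linarith [abs_nonneg T]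
  · linarith [le_abs_self T]
  · have h1 := hmax' d (hd.le.trans hνd₀)
    rw [show d₀ - d = (ν - d) + (d₀ - ν) by omega, pow_add, ← mul_assoc] at h1
    have h2 := le_of_mul_le_mul_right h1 (by positivity)
    calc C * a d ≤ C ^ (ν - d) * a d := by
          gcongr; exacts [ha d, le_self_pow₀ hC (by omega)]
      _ ≤ a ν := by linarith

/-- `ladder` makes each height `t l` large compared with the growth of `a` just after the earlier
peaks. -/
structure PeakSeq (a : ℕ → ℝ) (gap : ℕ) (A Θ : ℝ) (n : ℕ) where
  ν : ℕ → ℕ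
  t : ℕ → ℝ
  le_t : ∀ l < n, A ≤ t l
  t_le : ∀ l < n, t l ≤ a (ν l)
  record : ∀ l < n, ∀ d < ν l, Θ ^ 2 * t l * a d ≤ a (ν l)
  add_gap_le : ∀ l < n, ∀ k < l, ν k + gap ≤ ν l
  ladder : ∀ l < n, ∀ k < l, Θ ^ 2 * t k * a (ν k + (l - k)) ^ 2 ≤ t l * a (ν k) ^ 2

namespace PeakSeq

variable {gap n : ℕ} {A Θ : ℝ}

def snoc (p : PeakSeq a gap A Θ n) (ν' : ℕ) (t' : ℝ) (hA : A ≤ t') (ht : t' ≤ a ν')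
    (hrec : ∀ d < ν', Θ ^ 2 * t' * a d ≤ a ν') (hgap : ∀ k < n, p.ν k + gap ≤ ν')
    (hlad : ∀ k < n, Θ ^ 2 * p.t k * a (p.ν k + (n - k)) ^ 2 ≤ t' * a (p.ν k) ^ 2) :
    PeakSeq a gap A Θ (n + 1) where
  ν l := if l < n then p.ν l else ν'
  t l := if l < n then p.t l else t'
  le_t l hl := by
    split_ifs with h
    exacts [p.le_t l h, hA]
  t_le l hl := by
    split_ifs with h
    exacts [p.t_le l h, ht]
  record l hl := by
    split_ifs with h
    exacts [p.record l h, hrec]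
  add_gap_le l hl k hk := by
    have hkn : k < n := by omega
    split_ifs with h
    · exact p.add_gap_le l h k hk
    · exact hgap k hkn
  ladder l hl k hk := by
    have hkn : k < n := by omega
    split_ifs with h
    · exact p.ladder l h k hk
    · rw [show l = n by omega]; exact hlad k hkn

theorem nonempty (ha : ∀ d, 0 ≤ a d)
    (hgrowth : ∀ K C : ℝ, 0 < K → 0 < C → ∃ d, K * C ^ d < a d) (hA : 1 ≤ A) (hΘ : 1 ≤ Θ)
    (gap n : ℕ) : Nonempty (PeakSeq a gap A Θ n) := by
  induction n with
  | zero => exact ⟨⟨fun _ => 0, fun _ => 0, nofun, nofun, nofun, nofun, nofun⟩⟩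
  | succ n ih =>
    obtain ⟨p⟩ := ih
    have hpos : ∀ k < n, 0 < a (p.ν k) := fun k hk =>
      (one_pos.trans_le (hA.trans (p.le_t k hk))).trans_le (p.t_le k hk)
    set t' := A + ∑ k ∈ Finset.range n, Θ ^ 2 * p.t k * a (p.ν k + (n - k)) ^ 2 / a (p.ν k) ^ 2
    have hterm : ∀ k ∈ Finset.range n,
        0 ≤ Θ ^ 2 * p.t k * a (p.ν k + (n - k)) ^ 2 / a (p.ν k) ^ 2 := fun k hk => by
      have := hA.trans (p.le_t k (Finset.mem_range.1 hk)); positivity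
    have hAt' : A ≤ t' := le_add_of_nonneg_right (Finset.sum_nonneg hterm)
    obtain ⟨ν', hν', ht', hrec⟩ := exists_record ha hgrowth (C := Θ ^ 2 * t')
      (one_le_mul_of_one_le_of_one_le (one_le_pow₀ hΘ) (hA.trans hAt')) t'
      (∑ k ∈ Finset.range n, p.ν k + gap)
    refine ⟨p.snoc ν' t' hAt' ht' (fun d hd => (hrec d hd).trans_eq' (by ring)) (fun k hk => ?_)
      (fun k hk => ?_)⟩
    · have := Finset.single_le_sum (fun j _ => Nat.zero_le (p.ν j)) (Finset.mem_range.2 hk)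
      omega
    · have hle : Θ ^ 2 * p.t k * a (p.ν k + (n - k)) ^ 2 / a (p.ν k) ^ 2 ≤ t' :=
        (Finset.single_le_sum hterm (Finset.mem_range.2 hk)).trans (le_add_of_nonneg_left
          (zero_le_one.trans hA))
      rwa [div_le_iff₀ (by have := hpos k hk; positivity)] at hle

theorem ν_le (p : PeakSeq a gap A Θ n) {k l : ℕ} (hkl : k ≤ l) (hl : l < n) : p.ν k ≤ p.ν l := by
  rcases hkl.lt_or_eq with h | rfl
  exacts [(Nat.le_add_right _ _).trans (p.add_gap_le l hl k h), le_rfl]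

theorem t_pos (p : PeakSeq a gap A Θ n) (hA : 0 < A) {l : ℕ} (hl : l < n) : 0 < p.t l :=
  hA.trans_le (p.le_t l hl)

theorem apply_ν_pos (p : PeakSeq a gap A Θ n) (hA : 0 < A) {l : ℕ} (hl : l < n) : 0 < a (p.ν l) :=
  (p.t_pos hA hl).trans_le (p.t_le l hl)

theorem div_le_one (p : PeakSeq a gap A Θ n) (hA : 0 < A) {l : ℕ} (hl : l < n) :
    p.t l / a (p.ν l) ≤ 1 :=
  (_root_.div_le_one (p.apply_ν_pos hA hl)).2 (p.t_le l hl)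

theorem le_sqrt_mul_sqrt (p : PeakSeq a gap A Θ n) (hA : 0 ≤ A) {k l : ℕ} (hk : k < n)
    (hl : l < n) : A ≤ √(p.t k) * √(p.t l) := by
  calc A = √A * √A := (Real.mul_self_sqrt hA).symm
    _ ≤ √(p.t k) * √(p.t l) := by
      gcongr <;> exact p.le_t _ ‹_›

theorem mul_div_mul_le_of_lt (p : PeakSeq a gap A Θ n) (hA : 1 ≤ A) (hΘ : 1 ≤ Θ) {k l : ℕ}
    (hk : k < n) (hl : l < n) {d : ℕ} (hd : d < p.ν l) :
    Θ * (p.t l / a (p.ν l) * a d) ≤ √(p.t k) * √(p.t l) := by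
  have := p.apply_ν_pos (one_pos.trans_le hA) hl
  have hrec : Θ * (p.t l / a (p.ν l) * a d) ≤ 1 := by
    rw [div_mul_eq_mul_div, mul_div_assoc', _root_.div_le_one this]
    nlinarith [p.record l hl d hd, p.t_pos (one_pos.trans_le hA) hl]
  linarith [p.le_sqrt_mul_sqrt (zero_le_one.trans hA) hk hl]

theorem mul_div_mul_add_le (p : PeakSeq a gap A Θ n) (ha : ∀ d, 0 ≤ a d) (hA : 0 < A) (hΘ : 0 ≤ Θ)
    {k l : ℕ} (hkl : k < l) (hl : l < n) :
    Θ * (p.t k / a (p.ν k) * a (p.ν k + (l - k))) ≤ √(p.t k) * √(p.t l) := by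
  have hk := p.apply_ν_pos hA (hkl.trans hl)
  have htk := p.t_pos hA (hkl.trans hl)
  rw [← Real.sqrt_mul htk.le, Real.le_sqrt (by have := ha (p.ν k + (l - k)); positivity)
    (by have := p.t_pos hA hl; positivity), mul_pow, div_mul_eq_mul_div, div_pow,
    ← mul_div_assoc, div_le_iff₀ (by positivity)]
  have := mul_le_mul_of_nonneg_left (p.ladder l hl k hkl) htk.le
  nlinarith

end PeakSeq

end Peaks

section Toeplitz

variable {s : ℕ} {r : ℤ → Matrix (Fin s) (Fin s) Hq}

theorem norm_apply_natAbs (hherm : ∀ n : ℤ, r (-n) = (r n).conjTranspose) (z : ℤ) :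
    ‖r z.natAbs‖ = ‖r z‖ := by
  obtain ⟨n, rfl | rfl⟩ := Int.eq_nat_or_neg z
  · rfl
  · rw [Int.natAbs_neg, Int.natAbs_natCast, hherm, Matrix.norm_conjTranspose]

theorem qToeplitz_conjTranspose (hherm : ∀ n : ℤ, r (-n) = (r n).conjTranspose) (N : ℕ) :
    (qToeplitz r N).conjTranspose = qToeplitz r N := by
  refine Matrix.ext fun p q => ?_
  rw [conjTranspose_apply, qToeplitz, of_apply, of_apply, ← neg_sub, hherm, conjTranspose_apply,
    star_star]

theorem norm_qToeplitz_apply_le (hherm : ∀ n : ℤ, r (-n) = (r n).conjTranspose) {N d : ℕ}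
    {p q : Fin (N + 1) × Fin s} (h : ((p.1 : ℤ) - q.1).natAbs = d) :
    ‖qToeplitz r N p q‖ ≤ ‖r d‖ := by
  rw [← h, norm_apply_natAbs hherm]
  exact norm_entry_le_entrywise_sup_norm (r _)

theorem not_hasAtMostNegSquares_of_qNegDef_quatGram {N κ : ℕ}
    {x : Fin (κ + 1) → Fin (N + 1) × Fin s → Hq} (h : QNegDef (quatGram (qToeplitz r N) x)) :
    ¬ HasAtMostNegSquares r κ := fun hneg => by
  have := hneg N _ fun y hy hy0 => re_dotProduct_mulVec_neg_of_mem_span h hy hy0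
  rw [finrank_span_eq_card (linearIndependent_of_qNegDef_quatGram h), Fintype.card_fin] at this
  omega

end Toeplitz

section PeakFamily

variable {s κ N : ℕ} {r : ℤ → Matrix (Fin s) (Fin s) Hq} {A Θ : ℝ}

/-- The `k`-th vector lives at positions `κ - k` and `κ - k + ν k`. Putting later peaks further
left means that the Gram entry of vectors `k < l` only sees `r` at `ν l - (l - k)`, controlled by
`PeakSeq.record`, and at `ν k + (l - k)`, controlled by `PeakSeq.ladder`. -/
def peakFamily (p : PeakSeq (fun d : ℕ => ‖r d‖) (κ + 1) A Θ (κ + 1))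
    (P Q : Fin (κ + 1) → Fin (N + 1) × Fin s) (k : Fin (κ + 1)) : Fin (N + 1) × Fin s → Hq :=
  twoPoint (P k) (Q k) (negWeight (p.t k) (qToeplitz r N (Q k) (P k)))

variable {p : PeakSeq (fun d : ℕ => ‖r d‖) (κ + 1) A Θ (κ + 1)}
  {P Q : Fin (κ + 1) → Fin (N + 1) × Fin s}

theorem re_quatGram_peakFamily_self_le (hherm : ∀ n : ℤ, r (-n) = (r n).conjTranspose)
    (hR : ∀ k, ‖qToeplitz r N (Q k) (P k)‖ = ‖r (p.ν k)‖) (hA : 0 < A) (k : Fin (κ + 1)) :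
    (quatGram (qToeplitz r N) (peakFamily p P Q) k k).re ≤ 2 * ‖r 0‖ - 2 * p.t k := by
  have hdiag : ∀ R : Fin (N + 1) × Fin s, ‖qToeplitz r N R R‖ ≤ ‖r 0‖ := fun R =>
    norm_qToeplitz_apply_le hherm (by simp)
  have hPQ : qToeplitz r N (P k) (Q k) = star (qToeplitz r N (Q k) (P k)) := by
    simpa [conjTranspose_apply] using
      (congrFun (congrFun (qToeplitz_conjTranspose hherm N) (P k)) (Q k)).symm
  have := re_star_twoPoint_negWeight_le _ (P k) (Q k) hPQ (p.t_pos hA k.2)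
    ((p.t_le k k.2).trans_eq (hR k).symm)
  rw [quatGram, of_apply, peakFamily]
  linarith [hdiag (P k), hdiag (Q k)]

theorem norm_quatGram_peakFamily_le (hherm : ∀ n : ℤ, r (-n) = (r n).conjTranspose)
    (hP : ∀ k, ((P k).1 : ℤ) = κ - k) (hQ : ∀ k, ((Q k).1 : ℤ) = κ - k + p.ν k)
    (hR : ∀ k, ‖qToeplitz r N (Q k) (P k)‖ = ‖r (p.ν k)‖) (hA : 1 ≤ A) (hΘ : 1 ≤ Θ)
    (hAr : ∀ m ≤ κ, Θ * ‖r m‖ ≤ A) {k l : Fin (κ + 1)} (hkl : k < l) :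
    Θ * ‖quatGram (qToeplitz r N) (peakFamily p P Q) l k‖ ≤ 4 * (√(p.t k) * √(p.t l)) := by
  have hA0 : 0 < A := one_pos.trans_le hA
  have hkl' : (k : ℕ) < l := hkl
  have hgap := p.add_gap_le l l.2 k hkl'
  have hδ : ∀ j : Fin (κ + 1), 0 ≤ p.t j / ‖r (p.ν j)‖ := fun j =>
    div_nonneg (p.t_pos hA0 j.2).le (norm_nonneg _)
  have h1 : Θ * ‖qToeplitz r N (P l) (P k)‖ ≤ √(p.t k) * √(p.t l) :=
    calc _ ≤ Θ * ‖r ((l : ℕ) - k : ℕ)‖ := by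
          gcongr; exact norm_qToeplitz_apply_le hherm (by rw [hP, hP]; omega)
      _ ≤ _ := (hAr _ (by omega)).trans (p.le_sqrt_mul_sqrt hA0.le k.2 l.2)
  have h2 : Θ * (‖qToeplitz r N (P l) (Q k)‖ * (p.t k / ‖r (p.ν k)‖)) ≤
      √(p.t k) * √(p.t l) :=
    calc _ ≤ Θ * (p.t k / ‖r (p.ν k)‖ * ‖r (p.ν k + ((l : ℕ) - k) : ℕ)‖) := by
          rw [mul_comm (‖_‖)]; gcongr
          exacts [hδ k, norm_qToeplitz_apply_le hherm (by rw [hP, hQ]; omega)]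
      _ ≤ _ := p.mul_div_mul_add_le (fun _ => norm_nonneg _) hA0 (by linarith) hkl' l.2
  have h3 : Θ * (p.t l / ‖r (p.ν l)‖ * ‖qToeplitz r N (Q l) (P k)‖) ≤ √(p.t k) * √(p.t l) :=
    calc _ ≤ Θ * (p.t l / ‖r (p.ν l)‖ * ‖r (p.ν l - ((l : ℕ) - k) : ℕ)‖) := by
          gcongr
          exacts [hδ l, norm_qToeplitz_apply_le hherm (by rw [hQ, hP]; omega)]
      _ ≤ _ := p.mul_div_mul_le_of_lt hA hΘ k.2 l.2 (by omega)
  have h4 : Θ * (p.t l / ‖r (p.ν l)‖ * ‖qToeplitz r N (Q l) (Q k)‖ * (p.t k / ‖r (p.ν k)‖)) ≤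
      √(p.t k) * √(p.t l) :=
    calc _ ≤ Θ * (p.t l / ‖r (p.ν l)‖ * ‖r (p.ν l - p.ν k - ((l : ℕ) - k) : ℕ)‖ * 1) := by
          gcongr
          exacts [hδ k, mul_nonneg (hδ l) (norm_nonneg _), hδ l,
            norm_qToeplitz_apply_le hherm (by rw [hQ, hQ]; omega), p.div_le_one hA0 k.2]
      _ ≤ _ := by
          rw [mul_one]; exact p.mul_div_mul_le_of_lt hA hΘ k.2 l.2 (by omega)
  have hsum := norm_star_twoPoint_dotProduct_mulVec_twoPoint_le (qToeplitz r N) (P l) (Q l)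
    (P k) (Q k) (negWeight (p.t l) (qToeplitz r N (Q l) (P l)))
    (negWeight (p.t k) (qToeplitz r N (Q k) (P k)))
  rw [norm_negWeight (p.t_pos hA0 l.2).le, norm_negWeight (p.t_pos hA0 k.2).le, hR, hR] at hsum
  rw [quatGram, of_apply, peakFamily, peakFamily]
  have := mul_le_mul_of_nonneg_left hsum (zero_le_one.trans hΘ)
  linarith

theorem qNegDef_quatGram_peakFamily (hherm : ∀ n : ℤ, r (-n) = (r n).conjTranspose)
    (hP : ∀ k, ((P k).1 : ℤ) = κ - k) (hQ : ∀ k, ((Q k).1 : ℤ) = κ - k + p.ν k)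
    (hR : ∀ k, ‖qToeplitz r N (Q k) (P k)‖ = ‖r (p.ν k)‖) (hA : 1 ≤ A) (hΘ : 8 * (κ + 1) ≤ Θ)
    (hAr : ∀ m ≤ κ, Θ * ‖r m‖ ≤ A) (hAr₀ : 2 * ‖r 0‖ ≤ A) :
    QNegDef (quatGram (qToeplitz r N) (peakFamily p P Q)) := by
  have hA0 : 0 < A := one_pos.trans_le hA
  have hΘ1 : 1 ≤ Θ := by linarith
  have hlt : ∀ k l : Fin (κ + 1), k < l →
      2 * Fintype.card (Fin (κ + 1)) * ‖quatGram (qToeplitz r N) (peakFamily p P Q) l k‖ ≤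
        √(p.t k) * √(p.t l) := fun k l hkl => by
    have := norm_quatGram_peakFamily_le hherm hP hQ hR hA hΘ1 hAr hkl
    rw [Fintype.card_fin, Nat.cast_add, Nat.cast_one]
    have := norm_nonneg (quatGram (qToeplitz r N) (peakFamily p P Q) l k)
    nlinarith [Real.sqrt_nonneg (p.t k), Real.sqrt_nonneg (p.t l)]
  refine qNegDef_of_diag_dominant _ (fun k => √(p.t k)) (fun k => Real.sqrt_pos.2
    (p.t_pos hA0 k.2)) (fun k => star_quatGram (qToeplitz_conjTranspose hherm N) _ k k)
    (fun k => ?_) (fun k l hkl => ?_)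
  · rw [Real.sq_sqrt (p.t_pos hA0 k.2).le]
    linarith [re_quatGram_peakFamily_self_le hherm hR hA0 k, p.le_t k k.2]
  · rcases hkl.lt_or_gt with h | h
    · rw [← star_quatGram (qToeplitz_conjTranspose hherm N), norm_star]
      exact hlt k l h
    · rw [mul_comm (√_)]
      exact hlt l k h

end PeakFamily

theorem not_hasAtMostNegSquares_of_unbounded {s : ℕ} {r : ℤ → Matrix (Fin s) (Fin s) Hq}
    (hherm : ∀ n : ℤ, r (-n) = (r n).conjTranspose)
    (hgrowth : ∀ K C : ℝ, 0 < K → 0 < C → ∃ d : ℕ, K * C ^ d < ‖r d‖) (κ : ℕ) :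
    ¬ HasAtMostNegSquares r κ := by
  set Θ : ℝ := 8 * (κ + 1) with hΘ
  set S := ∑ m ∈ Finset.range (κ + 1), ‖r m‖
  set A : ℝ := 1 + 2 * ‖r 0‖ + Θ * S with hA
  have hΘ1 : 1 ≤ Θ := by rw [hΘ]; linarith [(Nat.cast_nonneg κ : (0 : ℝ) ≤ κ)]
  have hS : 0 ≤ S := Finset.sum_nonneg fun _ _ => norm_nonneg _
  have hA1 : 1 ≤ A := by nlinarith [norm_nonneg (r 0)]
  have hAr : ∀ m ≤ κ, Θ * ‖r m‖ ≤ A := fun m hm => by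
    have := Finset.single_le_sum (f := fun m : ℕ => ‖r m‖) (fun _ _ => norm_nonneg _)
      (Finset.mem_range.2 (Nat.lt_succ_of_le hm))
    nlinarith [norm_nonneg (r 0)]
  have hAr₀ : 2 * ‖r 0‖ ≤ A := by nlinarith
  obtain ⟨p⟩ := PeakSeq.nonempty (fun d => norm_nonneg (r d)) hgrowth hA1 hΘ1 (κ + 1) (κ + 1)
  choose i j hij using fun k : Fin (κ + 1) =>
    Matrix.exists_norm_apply_eq _ (p.apply_ν_pos (one_pos.trans_le hA1) k.2)
  have hν : ∀ k : Fin (κ + 1), p.ν k ≤ p.ν κ := fun k =>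
    p.ν_le (Nat.lt_succ_iff.1 k.2) κ.lt_succ_self
  let N := κ + p.ν κ
  let P (k : Fin (κ + 1)) : Fin (N + 1) × Fin s := (⟨κ - k, by omega⟩, j k)
  let Q (k : Fin (κ + 1)) : Fin (N + 1) × Fin s :=
    (⟨κ - k + p.ν k, by have := hν k; omega⟩, i k)
  have hP : ∀ k, ((P k).1 : ℤ) = κ - k := fun k => by simp only [P]; omega
  have hQ : ∀ k, ((Q k).1 : ℤ) = κ - k + p.ν k := fun k => by simp only [Q]; omega
  have hR : ∀ k, ‖qToeplitz r N (Q k) (P k)‖ = ‖r (p.ν k)‖ := fun k => by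
    rw [← hij k, qToeplitz, of_apply]
    congr 3
    linarith [hP k, hQ k]
  exact not_hasAtMostNegSquares_of_qNegDef_quatGram
    (qNegDef_quatGram_peakFamily hherm hP hQ hR hA1 le_rfl hAr hAr₀)

theorem negSquares_exponential_bound_general {s : ℕ} (κ : ℕ)
    (r : ℤ → Matrix (Fin s) (Fin s) Hq)
    (hherm : ∀ n : ℤ, r (-n) = (r n).conjTranspose)
    (hneg : HasAtMostNegSquares r κ) :
    ∃ K C : ℝ, 0 < K ∧ 0 < C ∧
      ∀ n : ℤ, ∀ i j, ‖r n i j‖ ≤ K * C ^ n.natAbs := by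
  by_contra! hgrowth
  refine not_hasAtMostNegSquares_of_unbounded hherm (fun K C hK hC => ?_) κ hneg
  obtain ⟨n, i, j, hn⟩ := hgrowth K C hK hC
  exact ⟨n.natAbs, hn.trans_le ((norm_entry_le_entrywise_sup_norm (r n)).trans_eq
    (norm_apply_natAbs hherm n).symm)⟩

/-- exponential bound on sequences with finitely many negative squares. -/
theorem negSquares_exponential_bound {s : ℕ} (hs : 1 ≤ s) (κ : ℕ)
    (r : ℤ → Matrix (Fin s) (Fin s) Hq)
    (hherm : ∀ n : ℤ, r (-n) = (r n).conjTranspose)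
    (hneg : HasAtMostNegSquares r κ) :
    ∃ K C : ℝ, 0 < K ∧ 0 < C ∧
      ∀ n : ℤ, ∀ i j, ‖r n i j‖ ≤ K * C ^ n.natAbs :=
  negSquares_exponential_bound_general κ r hherm hneg
end
end

section
/- Let s ≥ 1 and let r : ℤ → ℍ^{s×s} satisfy r(−n) = r(n)* and ‖r(n)‖ ≤ K·C^{|n|} for all n ∈ ℤ, where K > 0 and C ≥ 1. Then for all quaternions p, q with ‖p‖ < 1/C and ‖q‖ < 1/C: the series φ(p) = r(0) + 2·∑_{n=1}^∞ pⁿ • r(n) and K_φ(p,q) = ∑_{n,m=0}^∞ pⁿ • r(n−m) • (conj q)^m converge absolutely (here pⁿ • M • (conj q)^m means each entry of M is multiplied by pⁿ on the left and by (conj q)^m on the right), and the identity K_φ(p,q) − p • K_φ(p,q) • conj(q) = (φ(p) + φ(q)*)/2 holds, where φ(q)* is the quaternionic conjugate transpose of φ(q). -/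
noncomputable section

open MeasureTheory Matrix
open scoped ComplexOrder

/-- φ(p) = r(0) + 2 ∑_{n≥1} pⁿ r(n), entrywise. -/
def phiSeq {s : ℕ} (r : ℤ → Matrix (Fin s) (Fin s) Hq) (p : Hq) :
    Matrix (Fin s) (Fin s) Hq :=
  Matrix.of fun i j => r 0 i j + 2 * ∑' n : ℕ, p ^ (n + 1) * r ((n : ℤ) + 1) i j

/-- K_φ(p,q) = ∑_{n,m≥0} pⁿ r(n−m) (conj q)ᵐ, entrywise. -/
def kerSeq {s : ℕ} (r : ℤ → Matrix (Fin s) (Fin s) Hq) (p q : Hq) :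
    Matrix (Fin s) (Fin s) Hq :=
  Matrix.of fun i j =>
    ∑' nm : ℕ × ℕ, p ^ nm.1 * r ((nm.1 : ℤ) - (nm.2 : ℤ)) i j * (star q) ^ nm.2

/-! Both series are dominated by `K (‖p‖C)ⁿ (‖q‖C)ᵐ`, a product of convergent geometric series.
Multiplying the `(n, m)` term of `K_φ(p, q)` by `p` on the left and by `q̄` on the right gives its
`(n + 1, m + 1)` term, so `K_φ - p K_φ q̄` keeps only the terms on the axes `n = 0` and `m = 0`.
The origin contributes `r(0)`, the rest of the axis `m = 0` sums to `(φ(p) - r(0)) / 2`, and by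
`r(-n) = r(n)*` the rest of the axis `n = 0` sums to `(φ(q)* - r(0)) / 2`. -/

theorem Summable.tsum_prod_nat_eq_axes_add {E : Type*} [NormedAddCommGroup E] [CompleteSpace E]
    {f : ℕ × ℕ → E} (hf : Summable f) :
    ∑' nm, f nm = f (0, 0) + ∑' m, f (0, m + 1) + ∑' n, f (n + 1, 0)
      + ∑' nm : ℕ × ℕ, f (nm.1 + 1, nm.2 + 1) := by
  have hcol : Summable fun n => f (n + 1, 0) :=
    hf.comp_injective fun _ _ h => by simpa using h
  have hshift : Summable fun nm : ℕ × ℕ => f (nm.1 + 1, nm.2 + 1) :=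
    hf.comp_injective (Prod.map_injective.2 ⟨add_left_injective 1, add_left_injective 1⟩)
  have hrow (n : ℕ) : ∑' m, f (n, m) = f (n, 0) + ∑' m, f (n, m + 1) :=
    (hf.prod_factor n).tsum_eq_zero_add
  rw [hf.tsum_prod, hf.prod.tsum_eq_zero_add, hshift.tsum_prod, hrow 0]
  simp only [hrow]
  rw [hcol.tsum_add hshift.prod]
  abel

section ToeplitzKernel

variable {R : Type*} [NormedRing R]

theorem tsum_pow_mul_mul_pow_sub_mul_tsum_mul [CompleteSpace R] (a : ℤ → R) (x y : R)
    (h : Summable fun nm : ℕ × ℕ => x ^ nm.1 * a (nm.1 - nm.2) * y ^ nm.2) :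
    ∑' nm : ℕ × ℕ, x ^ nm.1 * a (nm.1 - nm.2) * y ^ nm.2
        - x * (∑' nm : ℕ × ℕ, x ^ nm.1 * a (nm.1 - nm.2) * y ^ nm.2) * y
      = a 0 + ∑' n : ℕ, x ^ (n + 1) * a (n + 1) + ∑' m : ℕ, a (-(m + 1)) * y ^ (m + 1) := by
  have hshift : x * (∑' nm : ℕ × ℕ, x ^ nm.1 * a (nm.1 - nm.2) * y ^ nm.2) * y
      = ∑' nm : ℕ × ℕ, x ^ (nm.1 + 1) * a ((nm.1 + 1 : ℕ) - (nm.2 + 1 : ℕ)) * y ^ (nm.2 + 1) := by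
    rw [← h.tsum_mul_left, ← (h.mul_left x).tsum_mul_right]
    refine tsum_congr fun nm => ?_
    push_cast
    rw [add_sub_add_right_eq_sub, pow_succ', pow_succ]
    simp only [mul_assoc]
  rw [hshift, h.tsum_prod_nat_eq_axes_add]
  push_cast
  simp only [pow_zero, one_mul, mul_one, sub_zero, zero_sub]
  abel

variable [NormOneClass R]

theorem summable_norm_pow_succ_mul {a : ℤ → R} {K C : ℝ} (hC : 0 ≤ C)
    (hbd : ∀ n, ‖a n‖ ≤ K * C ^ n.natAbs) {x : R} (hx : ‖x‖ * C < 1) :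
    Summable fun n : ℕ => ‖x ^ (n + 1) * a (n + 1)‖ := by
  refine Summable.of_nonneg_of_le (fun _ => norm_nonneg _) (fun n => ?_)
    ((summable_geometric_of_lt_one (by positivity) hx).mul_left (K * (‖x‖ * C)))
  calc ‖x ^ (n + 1) * a (n + 1)‖ ≤ ‖x‖ ^ (n + 1) * (K * C ^ (n + 1)) := by
        refine (norm_mul_le _ _).trans (mul_le_mul (norm_pow_le _ _) ?_ (norm_nonneg _) (by positivity))
        exact_mod_cast Int.natAbs_natCast (n + 1) ▸ hbd ((n + 1 : ℕ) : ℤ)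
    _ = K * (‖x‖ * C) * (‖x‖ * C) ^ n := by ring

theorem summable_norm_pow_mul_mul_pow {a : ℤ → R} {K C : ℝ} (hC : 1 ≤ C)
    (hbd : ∀ n, ‖a n‖ ≤ K * C ^ n.natAbs) {x y : R} (hx : ‖x‖ * C < 1) (hy : ‖y‖ * C < 1) :
    Summable fun nm : ℕ × ℕ => ‖x ^ nm.1 * a (nm.1 - nm.2) * y ^ nm.2‖ := by
  have hK : 0 ≤ K := by simpa using (norm_nonneg _).trans (hbd 0)
  have hC0 : 0 ≤ C := zero_le_one.trans hC
  refine Summable.of_nonneg_of_le (fun _ => norm_nonneg _) (fun nm => ?_)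
    (((summable_geometric_of_lt_one (by positivity) hx).mul_of_nonneg
      (summable_geometric_of_lt_one (by positivity) hy)
      (fun _ => by positivity) (fun _ => by positivity)).mul_left K)
  obtain ⟨n, m⟩ := nm
  have ha : ‖a (n - m)‖ ≤ K * C ^ (n + m) :=
    (hbd _).trans (mul_le_mul_of_nonneg_left (pow_le_pow_right₀ hC (by omega)) hK)
  calc ‖x ^ n * a (n - m) * y ^ m‖ ≤ ‖x‖ ^ n * (K * C ^ (n + m)) * ‖y‖ ^ m := by
        refine (norm_mul₃_le ..).trans ?_
        gcongr
        · exact norm_pow_le _ _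
        · exact norm_pow_le _ _
    _ = K * ((‖x‖ * C) ^ n * (‖y‖ * C) ^ m) := by ring

end ToeplitzKernel

theorem star_apply_eq_apply_neg {α ι : Type*} [Star α] {r : ℤ → Matrix ι ι α}
    (hherm : ∀ n : ℤ, r (-n) = (r n).conjTranspose) (n : ℤ) (i j : ι) :
    star (r n j i) = r (-n) i j := by
  rw [hherm, conjTranspose_apply]

theorem phiSeq_add_conjTranspose_apply_div_two {s : ℕ} {r : ℤ → Matrix (Fin s) (Fin s) Hq}
    (hherm : ∀ n : ℤ, r (-n) = (r n).conjTranspose) (p q : Hq) (i j : Fin s) :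
    (phiSeq r p i j + (phiSeq r q).conjTranspose i j) / 2
      = r 0 i j + ∑' n : ℕ, p ^ (n + 1) * r (n + 1) i j
          + ∑' m : ℕ, r (-(m + 1)) i j * star q ^ (m + 1) := by
  have hterm (m : ℕ) : star (q ^ (m + 1) * r (m + 1) j i) = r (-(m + 1)) i j * star q ^ (m + 1) := by
    rw [star_mul, star_pow, star_apply_eq_apply_neg hherm]
  have h2 : (2 : Hq) ≠ 0 := fun h => two_ne_zero (congrArg QuaternionAlgebra.re h)
  rw [div_eq_iff h2]
  simp only [phiSeq, conjTranspose_apply, of_apply, star_add, star_mul, tsum_star, hterm,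
    star_apply_eq_apply_neg hherm, neg_zero, star_ofNat]
  rw [(Commute.ofNat_right _ 2).eq]
  noncomm_ring

theorem kernel_identity_general {s : ℕ}
    (r : ℤ → Matrix (Fin s) (Fin s) Hq)
    (hherm : ∀ n : ℤ, r (-n) = (r n).conjTranspose)
    (K C : ℝ) (hC : 1 ≤ C)
    (hbd : ∀ n : ℤ, ∀ i j, ‖r n i j‖ ≤ K * C ^ n.natAbs) :
    ∀ p q : Hq, ‖p‖ < 1/C → ‖q‖ < 1/C →
      (∀ i j, Summable fun n : ℕ => ‖p ^ (n + 1) * r ((n : ℤ) + 1) i j‖) ∧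
      (∀ i j, Summable fun nm : ℕ × ℕ =>
          ‖p ^ nm.1 * r ((nm.1 : ℤ) - (nm.2 : ℤ)) i j * (star q) ^ nm.2‖) ∧
      (∀ i j, kerSeq r p q i j - p * kerSeq r p q i j * star q =
          (phiSeq r p i j + (phiSeq r q).conjTranspose i j) / 2) := by
  intro p q hp hq
  have hC0 : 0 < C := zero_lt_one.trans_le hC
  have hp' : ‖p‖ * C < 1 := (lt_div_iff₀ hC0).mp hp
  have hq' : ‖star q‖ * C < 1 := by rwa [norm_star, ← lt_div_iff₀ hC0]
  have hker (i j : Fin s) := summable_norm_pow_mul_mul_pow hC (hbd · i j) hp' hq'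
  refine ⟨fun i j => summable_norm_pow_succ_mul hC0.le (hbd · i j) hp', hker, fun i j => ?_⟩
  rw [phiSeq_add_conjTranspose_apply_div_two hherm]
  exact tsum_pow_mul_mul_pow_sub_mul_tsum_mul (r · i j) p (star q) (hker i j).of_norm

/-- convergence of φ and K_φ and the fundamental identity. -/
theorem kernel_identity {s : ℕ} (hs : 1 ≤ s)
    (r : ℤ → Matrix (Fin s) (Fin s) Hq)
    (hherm : ∀ n : ℤ, r (-n) = (r n).conjTranspose)
    (K C : ℝ) (hK : 0 < K) (hC : 1 ≤ C)
    (hbd : ∀ n : ℤ, ∀ i j, ‖r n i j‖ ≤ K * C ^ n.natAbs) :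
    ∀ p q : Hq, ‖p‖ < 1/C → ‖q‖ < 1/C →
      (∀ i j, Summable fun n : ℕ => ‖p ^ (n + 1) * r ((n : ℤ) + 1) i j‖) ∧
      (∀ i j, Summable fun nm : ℕ × ℕ =>
          ‖p ^ nm.1 * r ((nm.1 : ℤ) - (nm.2 : ℤ)) i j * (star q) ^ nm.2‖) ∧
      (∀ i j, kerSeq r p q i j - p * kerSeq r p q i j * star q =
          (phiSeq r p i j + (phiSeq r q).conjTranspose i j) / 2) :=
  kernel_identity_general r hherm K C hC hbd
end
end

section
/- Let s ≥ 1 and let r : ℤ → ℍ^{s×s} satisfy r(−n) = r(n)* and ‖r(n)‖ ≤ K·C^{|n|} for all n ∈ ℤ, where K > 0 and C ≥ 1. Define, for ‖p‖, ‖q‖ < 1/C, φ(p) = r(0) + 2·∑_{n=1}^∞ pⁿ • r(n) and K_φ(p,q) = ∑_{n,m=0}^∞ pⁿ • r(n−m) • (conj q)^m. Then for all p, q with ‖p‖ < min(1, 1/C) and ‖q‖ < min(1, 1/C): K_φ(p,q) = ∑_{n=0}^∞ pⁿ • ((φ(p) + φ(q)*)/2) • (conj q)ⁿ, where φ(q)*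 is the quaternionic conjugate transpose and pⁿ • M • (conj q)ⁿ means each entry of M is multiplied by pⁿ on the left and by (conj q)ⁿ on the right. -/
noncomputable section

open MeasureTheory Matrix
open scoped ComplexOrder

/-! Sort the terms `pⁿ r(n - m) q̄ᵐ` of the double series by `min n m`. The hook `min n m = N`
consists of the points `(N + k, N)` and `(N, N + k + 1)`, and factoring `p^N` out on the left and
`q̄^N` on the right leaves `∑ pᵏ r(k) + ∑ r(-k-1) q̄ᵏ⁺¹`, the same for every hook. By the symmetry
`r(-n) = r(n)*`, the second sum is `(φ(q)* - r(0))/2`, and the first is `(φ(p) + r(0))/2`. -/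
def hookEquiv : ℕ × (ℕ ⊕ ℕ) ≃ ℕ × ℕ where
  toFun
    | (m, .inl k) => (m + k, m)
    | (m, .inr k) => (m, m + k + 1)
  invFun x := if x.2 ≤ x.1 then (x.2, .inl (x.1 - x.2)) else (x.1, .inr (x.2 - x.1 - 1))
  left_inv
    | (m, .inl k) => by simp
    | (m, .inr k) => by simp [show m + k + 1 - m - 1 = k by omega]
  right_inv x := by
    obtain ⟨n, m⟩ := x
    by_cases h : m ≤ n
    · simp [h]
    · simp only [h, if_false, Prod.mk.injEq, true_and]
      omega

theorem Summable.tsum_eq_tsum_hook {α : Type*} [AddCommGroup α] [UniformSpace α]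
    [IsUniformAddGroup α] [CompleteSpace α] [T0Space α] {f : ℕ × ℕ → α} (hf : Summable f) :
    ∑' x, f x = ∑' m, (∑' k, f (m + k, m) + ∑' k, f (m, m + k + 1)) := by
  have hf' : Summable (f ∘ hookEquiv) := hookEquiv.summable_iff.mpr hf
  rw [← hookEquiv.tsum_eq, ← Function.comp_def, hf'.tsum_prod]
  refine tsum_congr fun m => ?_
  have hm := hf'.prod_factor m
  exact (hm.comp_injective Sum.inl_injective).tsum_sum (hm.comp_injective Sum.inr_injective)

section Kernel

variable {R : Type*}

theorem summable_toeplitzKernel [NormedRing R] [NormOneClass R] [CompleteSpace R]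
    {a : ℤ → R} {K C : ℝ} (hC : 1 ≤ C) (ha : ∀ n, ‖a n‖ ≤ K * C ^ n.natAbs) {p q : R}
    (hp : ‖p‖ * C < 1) (hq : ‖q‖ * C < 1) :
    Summable fun nm : ℕ × ℕ => p ^ nm.1 * a (nm.1 - nm.2) * q ^ nm.2 := by
  have hgeo : Summable fun nm : ℕ × ℕ => K * ((‖p‖ * C) ^ nm.1 * (‖q‖ * C) ^ nm.2) :=
    ((summable_geometric_of_lt_one (by positivity) hp).mul_of_nonneg
      (summable_geometric_of_lt_one (by positivity) hq) (fun _ => by positivity)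
      (fun _ => by positivity)).mul_left K
  refine .of_norm_bounded hgeo fun ⟨n, m⟩ => ?_
  have hnm : C ^ ((n : ℤ) - m).natAbs ≤ C ^ (n + m) :=
    pow_le_pow_right₀ hC (by omega)
  have hK : 0 ≤ K := by simpa using (norm_nonneg _).trans (ha 0)
  calc ‖p ^ n * a (n - m) * q ^ m‖ ≤ ‖p‖ ^ n * (K * C ^ (n + m)) * ‖q‖ ^ m := by
        refine (norm_mul_le _ _).trans (mul_le_mul ((norm_mul_le _ _).trans ?_) (norm_pow_le _ _)
          (norm_nonneg _) (by positivity))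
        exact mul_le_mul (norm_pow_le _ _) ((ha _).trans (by gcongr)) (norm_nonneg _)
          (by positivity)
    _ = K * ((‖p‖ * C) ^ n * (‖q‖ * C) ^ m) := by ring

theorem tsum_toeplitzKernel_eq [NormedDivisionRing R] [CompleteSpace R] {a : ℤ → R} {p q : R}
    (h : Summable fun nm : ℕ × ℕ => p ^ nm.1 * a (nm.1 - nm.2) * q ^ nm.2) :
    ∑' nm : ℕ × ℕ, p ^ nm.1 * a (nm.1 - nm.2) * q ^ nm.2 =
      ∑' n : ℕ, p ^ n * (∑' k : ℕ, p ^ k * a k + ∑' k : ℕ, a (-(k + 1)) * q ^ (k + 1)) * q ^ n := by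
  rw [h.tsum_eq_tsum_hook]
  refine tsum_congr fun n => ?_
  have lower (k : ℕ) :
      p ^ (n + k) * a ((n + k : ℕ) - n) * q ^ n = p ^ n * (p ^ k * a k) * q ^ n := by
    rw [pow_add, mul_assoc (p ^ n), Nat.cast_add, add_sub_cancel_left]
  have upper (k : ℕ) : p ^ n * a (n - (n + k + 1 : ℕ)) * q ^ (n + k + 1) =
      p ^ n * (a (-(k + 1)) * q ^ (k + 1)) * q ^ n := by
    rw [show (n : ℤ) - (n + k + 1 : ℕ) = -(k + 1) by push_cast; ring,
      show n + k + 1 = (k + 1) + n by omega, pow_add]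
    simp only [mul_assoc]
  simp only [lower, upper, tsum_mul_left, tsum_mul_right, mul_add, add_mul]

end Kernel

instance Quaternion.instCharZero {R : Type*} [CommRing R] [CharZero R] :
    CharZero (Quaternion R) :=
  ⟨fun m n h => by simpa using congrArg QuaternionAlgebra.re h⟩

section Phi

variable {s : ℕ} {r : ℤ → Matrix (Fin s) (Fin s) Hq}

theorem phiSeq_apply_add_apply_zero {p : Hq} {i j : Fin s}
    (hsum : Summable fun k : ℕ => p ^ k * r k i j) :
    phiSeq r p i j + r 0 i j = 2 * ∑' k : ℕ, p ^ k * r k i j := by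
  rw [hsum.tsum_eq_zero_add, phiSeq, of_apply]
  simp only [pow_zero, one_mul, Nat.cast_zero, Nat.cast_succ, mul_add, two_mul]
  abel

theorem conjTranspose_phiSeq_apply (hherm : ∀ n : ℤ, r (-n) = (r n)ᴴ) (q : Hq) (i j : Fin s) :
    (phiSeq r q)ᴴ i j = r 0 i j + 2 * ∑' k : ℕ, r (-(k + 1)) i j * star q ^ (k + 1) := by
  have star_apply (n : ℤ) : star (r n j i) = r (-n) i j := by rw [hherm, conjTranspose_apply]
  simp only [conjTranspose_apply, phiSeq, of_apply, star_add, star_mul, star_ofNat, tsum_star,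
    star_pow, star_apply, neg_zero]
  rw [mul_two, ← two_mul]

theorem phiSeq_add_conjTranspose_div_two (hherm : ∀ n : ℤ, r (-n) = (r n)ᴴ) {p : Hq}
    (q : Hq) {i j : Fin s} (hsum : Summable fun k : ℕ => p ^ k * r k i j) :
    (phiSeq r p i j + (phiSeq r q)ᴴ i j) / 2 =
      ∑' k : ℕ, p ^ k * r k i j + ∑' k : ℕ, r (-(k + 1)) i j * star q ^ (k + 1) := by
  rw [div_eq_iff two_ne_zero, conjTranspose_phiSeq_apply hherm, ← add_assoc,
    phiSeq_apply_add_apply_zero hsum, ← mul_add, two_mul, mul_two]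

end Phi

theorem kernel_series_representation_general {s : ℕ}
    (r : ℤ → Matrix (Fin s) (Fin s) Hq)
    (hherm : ∀ n : ℤ, r (-n) = (r n).conjTranspose)
    (K C : ℝ) (hC : 1 ≤ C)
    (hbd : ∀ n : ℤ, ∀ i j, ‖r n i j‖ ≤ K * C ^ n.natAbs) :
    ∀ p q : Hq, ‖p‖ < min 1 (1/C) → ‖q‖ < min 1 (1/C) →
      ∀ i j, kerSeq r p q i j =
        ∑' n : ℕ, p ^ n *
          ((phiSeq r p i j + (phiSeq r q).conjTranspose i j) / 2) * (star q) ^ n := by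
  intro p q hp hq i j
  have radius {x : Hq} (hx : ‖x‖ < min 1 (1 / C)) : ‖x‖ * C < 1 :=
    (lt_div_iff₀ (one_pos.trans_le hC)).mp (hx.trans_le (min_le_right _ _))
  have hker := summable_toeplitzKernel (a := (r · i j)) hC (hbd · i j) (radius hp)
    (q := star q) (by simpa only [norm_star] using radius hq)
  have hΦ : Summable fun k : ℕ => p ^ k * r k i j := by
    simpa [Function.comp_def] using hker.comp_injective (Prod.mk_left_injective 0)
  rw [phiSeq_add_conjTranspose_div_two hherm q hΦ]
  exact tsum_toeplitzKernel_eq (a := (r · i j)) hker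

/-- K_φ(p,q) = ∑_{n≥0} pⁿ ((φ(p)+φ(q)*)/2) (conj q)ⁿ. -/
theorem kernel_series_representation {s : ℕ} (hs : 1 ≤ s)
    (r : ℤ → Matrix (Fin s) (Fin s) Hq)
    (hherm : ∀ n : ℤ, r (-n) = (r n).conjTranspose)
    (K C : ℝ) (hK : 0 < K) (hC : 1 ≤ C)
    (hbd : ∀ n : ℤ, ∀ i j, ‖r n i j‖ ≤ K * C ^ n.natAbs) :
    ∀ p q : Hq, ‖p‖ < min 1 (1/C) → ‖q‖ < min 1 (1/C) →
      ∀ i j, kerSeq r p q i j =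
        ∑' n : ℕ, p ^ n *
          ((phiSeq r p i j + (phiSeq r q).conjTranspose i j) / 2) * (star q) ^ n :=
  kernel_series_representation_general r hherm K C hC hbd
end
end

section
/- Let s ≥ 1, κ ≥ 0, and let r : ℤ → ℍ^{s×s} be Hermitian (r(−n) = r(n)*) with at most κ negative squares, and assume ‖r(n)‖ ≤ K·C^{|n|} for all n with K > 0, C ≥ 1. Define K_φ(p,q) = ∑_{n,m=0}^∞ pⁿ • r(n−m) • (conj q)^m for ‖p‖, ‖q‖ < min(1, 1/C). Then for any finitely many points p₁,…,p_m with ‖p_a‖ < min(1, 1/C), the block matrix M = (K_φ(p_a, p_b))_{a,b=1}^{m} ∈ ℍ^{ms×ms} satisfies M* = M, and every right ℍ-submodule W of ℍ^{ms} such that re(star x ⬝ᵥ (M *ᵥ x)) < 0 for all nonzero x ∈ W has dimension at most κ over ℍ. -/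
noncomputable section

open MeasureTheory Matrix
open scoped ComplexOrder

/-! The truncation of the kernel to `n, m ≤ N`, evaluated at the points `p_a`, is `Vᴴ T_N V`, where
`V` is the block matrix with entries `(conj p_a)ⁿ`. Hence `V` maps every subspace on which the
truncated form is negative injectively onto a negative subspace of `T_N`. The exponential bound
makes the truncations converge to the kernel, and negativity of `re (x* A x)` on a fixed
finite-dimensional subspace is an open condition on `A` (the unit sphere of the subspace is
compact), so a subspace that is negative for the kernel is already negative for some truncation. -/

open Filter Topology

instance Quaternion.instStarModule {R : Type*} [CommRing R] [StarRing R] [TrivialStar R] :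
    StarModule R (Quaternion R) :=
  ⟨fun r a => by ext <;> simp⟩

section MatrixForm

variable {ι ι' : Type*} [Fintype ι]

section

variable {R : Type*} [Semiring R] [StarRing R]

lemma continuous_star_dotProduct_mulVec [TopologicalSpace R] [IsTopologicalSemiring R]
    [ContinuousStar R] :
    Continuous fun Bx : Matrix ι ι R × (ι → R) => star Bx.2 ⬝ᵥ Bx.1 *ᵥ Bx.2 :=
  continuous_snd.star.dotProduct (continuous_fst.matrix_mulVec continuous_snd)

lemma star_smul_dotProduct_mulVec_smul {𝕜 : Type*} [CommSemiring 𝕜] [StarRing 𝕜] [TrivialStar 𝕜]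
    [Algebra 𝕜 R] [StarModule 𝕜 R] (A : Matrix ι ι R) (c : 𝕜) (x : ι → R) :
    star (c • x) ⬝ᵥ A *ᵥ (c • x) = (c * c) • (star x ⬝ᵥ A *ᵥ x) := by
  rw [star_smul, star_trivial, Matrix.mulVec_smul, dotProduct_smul, smul_dotProduct, smul_smul]

lemma star_mulVec_dotProduct_mulVec_mulVec [Fintype ι'] (V : Matrix ι' ι R) (T : Matrix ι' ι' R)
    (x : ι → R) : star (V *ᵥ x) ⬝ᵥ T *ᵥ (V *ᵥ x) = star x ⬝ᵥ (Vᴴ * T * V) *ᵥ x := by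
  rw [Matrix.star_mulVec, Matrix.dotProduct_mulVec, Matrix.dotProduct_mulVec,
    Matrix.dotProduct_mulVec, Matrix.vecMul_vecMul, Matrix.vecMul_vecMul, Matrix.mul_assoc]

end

lemma eventually_nhds_re_star_dotProduct_mulVec_neg (A : Matrix ι ι Hq)
    (W : Submodule Hqᵐᵒᵖ (ι → Hq))
    (hA : ∀ x ∈ W, x ≠ 0 → (star x ⬝ᵥ A *ᵥ x).re < 0) :
    ∀ᶠ B in 𝓝 A, ∀ x ∈ W, x ≠ 0 → (star x ⬝ᵥ B *ᵥ x).re < 0 := by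
  set S : Set (ι → Hq) := W ∩ Metric.sphere 0 1
  have hS : IsCompact S :=
    (isCompact_sphere 0 1).inter_left (W.restrictScalars ℝ).closed_of_finiteDimensional
  have hAS : ∀ y ∈ S, ∀ᶠ Bx : Matrix ι ι Hq × (ι → Hq) in 𝓝 (A, y),
      (star Bx.2 ⬝ᵥ Bx.1 *ᵥ Bx.2).re < 0 := fun y hy =>
    (Quaternion.continuous_re.comp continuous_star_dotProduct_mulVec).continuousAt.eventually_lt
      continuousAt_const
      (hA y hy.1 (ne_zero_of_mem_sphere one_ne_zero ⟨y, hy.2⟩))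
  filter_upwards [hS.eventually_forall_of_forall_eventually
    (P := fun B y => (star y ⬝ᵥ B *ᵥ y).re < 0) hAS] with B hB x hxW hx
  have hxpos : 0 < ‖x‖ := norm_pos_iff.mpr hx
  have hy : ‖x‖⁻¹ • x ∈ S :=
    ⟨(W.restrictScalars ℝ).smul_mem _ hxW, by simp [norm_smul, hxpos.ne']⟩
  have hBy := hB _ hy
  rw [star_smul_dotProduct_mulVec_smul, Quaternion.re_smul] at hBy
  exact neg_of_mul_neg_right (by simpa using hBy) (by positivity)


lemma exists_finrank_eq_of_re_conjTranspose_mul_mul_neg [Fintype ι']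
    (V : Matrix ι' ι Hq) (T : Matrix ι' ι' Hq) (W : Submodule Hqᵐᵒᵖ (ι → Hq))
    (hW : ∀ x ∈ W, x ≠ 0 → (star x ⬝ᵥ (Vᴴ * T * V) *ᵥ x).re < 0) :
    ∃ W' : Submodule Hqᵐᵒᵖ (ι' → Hq), (∀ y ∈ W', y ≠ 0 → (star y ⬝ᵥ T *ᵥ y).re < 0) ∧
      Module.finrank Hqᵐᵒᵖ W' = Module.finrank Hqᵐᵒᵖ W := by
  set f := Matrix.mulVecBilin ℝ Hqᵐᵒᵖ V ∘ₗ W.subtype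
  have hf : ∀ x : W, (x : ι → Hq) ≠ 0 → (star (f x) ⬝ᵥ T *ᵥ f x).re < 0 := fun x hx => by
    have hx' := hW x x.2 hx
    rwa [← star_mulVec_dotProduct_mulVec_mulVec] at hx'
  have hinj : Function.Injective f := by
    refine (injective_iff_map_eq_zero f).mpr fun x hx => ?_
    by_contra hne
    have hx' := hf x (by simpa using hne)
    rw [hx] at hx'
    simp only [star_zero, Matrix.mulVec_zero, dotProduct_zero] at hx'
    exact lt_irrefl _ hx'
  refine ⟨LinearMap.range f, ?_, (LinearEquiv.ofInjective f hinj).finrank_eq.symm⟩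
  rintro _ ⟨x, rfl⟩ hx
  exact hf x fun h => hx (by rw [Subtype.ext (h.trans W.coe_zero.symm), map_zero])

end MatrixForm

lemma HasSum.tendsto_sum_range_prod_range {α : Type*} [AddCommMonoid α] [TopologicalSpace α]
    {f : ℕ × ℕ → α} {a : α} (h : HasSum f a) :
    Tendsto (fun N => ∑ nm ∈ Finset.range N ×ˢ Finset.range N, f nm) atTop (𝓝 a) :=
  have hrange : Tendsto (fun N => (Finset.range N, Finset.range N)) atTop atTop := by
    rw [← prod_atTop_atTop_eq]
    exact tendsto_finset_range.prodMk tendsto_finset_range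
  h.comp (tendsto_finsetProd_atTop.comp hrange)

section Kernel

variable {s : ℕ} (r : ℤ → Matrix (Fin s) (Fin s) Hq)

def kerSeqTerm (p q : Hq) (i j : Fin s) (nm : ℕ × ℕ) : Hq :=
  p ^ nm.1 * r ((nm.1 : ℤ) - (nm.2 : ℤ)) i j * star q ^ nm.2

lemma kerSeq_conjTranspose (hherm : ∀ n : ℤ, r (-n) = (r n)ᴴ) (p q : Hq) :
    (kerSeq r p q)ᴴ = kerSeq r q p := by
  refine Matrix.ext fun i j => ?_
  rw [Matrix.conjTranspose_apply, kerSeq, kerSeq, Matrix.of_apply, Matrix.of_apply, tsum_star]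
  rw [← (Equiv.prodComm ℕ ℕ).tsum_eq]
  refine tsum_congr fun nm => ?_
  simp only [Equiv.prodComm_apply, Prod.fst_swap, Prod.snd_swap, star_mul, star_pow, star_star,
    ← Matrix.conjTranspose_apply, ← hherm, neg_sub, mul_assoc]

lemma norm_kerSeqTerm_le {K C : ℝ} (hC : 1 ≤ C)
    (hbd : ∀ n : ℤ, ∀ i j, ‖r n i j‖ ≤ K * C ^ n.natAbs) (p q : Hq) (i j : Fin s) (nm : ℕ × ℕ) :
    ‖kerSeqTerm r p q i j nm‖ ≤ K * ((C * ‖p‖) ^ nm.1 * (C * ‖q‖) ^ nm.2) := by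
  have hK : 0 ≤ K := by simpa using (norm_nonneg _).trans (hbd 0 i j)
  have hr : ‖r ((nm.1 : ℤ) - (nm.2 : ℤ)) i j‖ ≤ K * C ^ (nm.1 + nm.2) :=
    (hbd _ i j).trans <| mul_le_mul_of_nonneg_left (pow_le_pow_right₀ hC (by omega)) hK
  calc ‖kerSeqTerm r p q i j nm‖
      = ‖p‖ ^ nm.1 * ‖r ((nm.1 : ℤ) - (nm.2 : ℤ)) i j‖ * ‖q‖ ^ nm.2 := by
        simp [kerSeqTerm]
    _ ≤ ‖p‖ ^ nm.1 * (K * C ^ (nm.1 + nm.2)) * ‖q‖ ^ nm.2 := by gcongr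
    _ = K * ((C * ‖p‖) ^ nm.1 * (C * ‖q‖) ^ nm.2) := by ring

lemma summable_kerSeqTerm {K C : ℝ} (hC : 1 ≤ C)
    (hbd : ∀ n : ℤ, ∀ i j, ‖r n i j‖ ≤ K * C ^ n.natAbs) {p q : Hq}
    (hp : C * ‖p‖ < 1) (hq : C * ‖q‖ < 1) (i j : Fin s) :
    Summable (kerSeqTerm r p q i j) := by
  have hC0 : 0 ≤ C := zero_le_one.trans hC
  have geom {x : Hq} (hx : C * ‖x‖ < 1) := summable_geometric_of_lt_one (by positivity) hx
  exact .of_norm_bounded (((geom hp).mul_of_nonneg (geom hq) (fun _ => by positivity)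
    (fun _ => by positivity)).mul_left K) (norm_kerSeqTerm_le r hC hbd p q i j)

def powBlock (s : ℕ) {ι : Type*} (p : ι → Hq) (N : ℕ) :
    Matrix (Fin (N + 1) × Fin s) (ι × Fin s) Hq :=
  Matrix.of fun q u => if q.2 = u.2 then star (p u.1) ^ (q.1 : ℕ) else 0

lemma conjTranspose_powBlock_mul_qToeplitz_mul_powBlock {ι : Type*} [Fintype ι] (p : ι → Hq)
    (N : ℕ) :
    (powBlock s p N)ᴴ * qToeplitz r N * powBlock s p N = Matrix.of fun u v =>
      ∑ nm ∈ Finset.range (N + 1) ×ˢ Finset.range (N + 1),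
        kerSeqTerm r (p u.1) (p v.1) u.2 v.2 nm := by
  refine Matrix.ext fun u v => ?_
  simp only [Matrix.mul_apply, Matrix.conjTranspose_apply, powBlock, qToeplitz, Matrix.of_apply,
    Fintype.sum_prod_type, apply_ite star, star_pow, star_star, star_zero, ite_mul, mul_ite,
    zero_mul, mul_zero, Finset.sum_ite_eq', Finset.mem_univ, if_true, Finset.sum_mul,
    Finset.sum_product, kerSeqTerm, Finset.sum_range]
  exact Finset.sum_comm

end Kernel

theorem kernel_negSquares_general {s : ℕ} (κ : ℕ)
    (r : ℤ → Matrix (Fin s) (Fin s) Hq)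
    (hherm : ∀ n : ℤ, r (-n) = (r n).conjTranspose)
    (hneg : HasAtMostNegSquares r κ)
    (K C : ℝ) (hC : 1 ≤ C)
    (hbd : ∀ n : ℤ, ∀ i j, ‖r n i j‖ ≤ K * C ^ n.natAbs)
    (m : ℕ) (p : Fin m → Hq) (hp : ∀ a, ‖p a‖ < min 1 (1/C)) :
    letI M : Matrix (Fin m × Fin s) (Fin m × Fin s) Hq :=
      Matrix.of fun u v => kerSeq r (p u.1) (p v.1) u.2 v.2
    M.conjTranspose = M ∧
      ∀ W : Submodule Hqᵐᵒᵖ (Fin m × Fin s → Hq),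
        (∀ x ∈ W, x ≠ 0 → (dotProduct (star x) (M.mulVec x)).re < 0) →
        Module.finrank Hqᵐᵒᵖ W ≤ κ := by
  set M : Matrix (Fin m × Fin s) (Fin m × Fin s) Hq :=
    Matrix.of fun u v => kerSeq r (p u.1) (p v.1) u.2 v.2
  have hCp (a : Fin m) : C * ‖p a‖ < 1 :=
    (lt_div_iff₀' (by linarith)).mp ((hp a).trans_le (min_le_right _ _))
  refine ⟨Matrix.ext fun u v => ?_, fun W hW => ?_⟩
  · exact congrFun₂ (kerSeq_conjTranspose r hherm (p v.1) (p u.1)) u.2 v.2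
  have hlim :
      Tendsto (fun N => (powBlock s p N)ᴴ * qToeplitz r N * powBlock s p N) atTop (𝓝 M) := by
    simp only [conjTranspose_powBlock_mul_qToeplitz_mul_powBlock]
    refine tendsto_pi_nhds.mpr fun u => tendsto_pi_nhds.mpr fun v => ?_
    exact (summable_kerSeqTerm r hC hbd (hCp u.1) (hCp v.1) u.2 v.2).hasSum
      |>.tendsto_sum_range_prod_range.comp (tendsto_add_atTop_nat 1)
  obtain ⟨N, hN⟩ :=
    (hlim.eventually (eventually_nhds_re_star_dotProduct_mulVec_neg M W hW)).exists
  obtain ⟨W', hW', hrank⟩ := exists_finrank_eq_of_re_conjTranspose_mul_mul_neg _ _ W hN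
  exact hrank ▸ hneg N W' hW'

/-- the kernel K_φ has at most κ negative squares. -/
theorem kernel_negSquares {s : ℕ} (hs : 1 ≤ s) (κ : ℕ)
    (r : ℤ → Matrix (Fin s) (Fin s) Hq)
    (hherm : ∀ n : ℤ, r (-n) = (r n).conjTranspose)
    (hneg : HasAtMostNegSquares r κ)
    (K C : ℝ) (hK : 0 < K) (hC : 1 ≤ C)
    (hbd : ∀ n : ℤ, ∀ i j, ‖r n i j‖ ≤ K * C ^ n.natAbs)
    (m : ℕ) (p : Fin m → Hq) (hp : ∀ a, ‖p a‖ < min 1 (1/C)) :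
    letI M : Matrix (Fin m × Fin s) (Fin m × Fin s) Hq :=
      Matrix.of fun u v => kerSeq r (p u.1) (p v.1) u.2 v.2
    M.conjTranspose = M ∧
      ∀ W : Submodule Hqᵐᵒᵖ (Fin m × Fin s → Hq),
        (∀ x ∈ W, x ≠ 0 → (dotProduct (star x) (M.mulVec x)).re < 0) →
        Module.finrank Hqᵐᵒᵖ W ≤ κ :=
  kernel_negSquares_general κ r hherm hneg K C hC hbd m p hp
end
end

section
/- Let (aₙ)_{n≥0} be a sequence in ℍ with a₀ = 1 such that f(p) = ∑ₙ pⁿ aₙ converges for all ‖p‖ < 1, and assume re(f(p)) ≥ 0 for every p with ‖p‖ < 1. Then there exists a real constant k such that ‖aₙ‖ ≤ k for every n ≥ 0. -/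
noncomputable section

open MeasureTheory Matrix
open scoped ComplexOrder

/-!
Restrict `f` to a slice `ℝ + ℝ I` with `I² = -1`, `Re I = 0`. For `r < 1` the real part
`u θ = Re f (r cos θ + r sin θ I)` is a nonnegative trigonometric series `Re ∑ rᵐ cₘ e^{imθ}`,
where `cₘ ∈ ℂ` collects the components of `aₘ` along `1` and `I`. Against `e^{-inθ}` on `[0, 2π]`
it integrates to `π rⁿ cₙ`, and on its own to `2π Re c₀ = 2π`; since `u ≥ 0` this is
Carathéodory's estimate `rⁿ ‖cₙ‖ ≤ 2`. Let `r → 1` and point `I` along the imaginary part of `aₙ`,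
so that `‖cₙ‖ = ‖aₙ‖`.
-/

open Filter Topology
open scoped Real ComplexConjugate Quaternion

section Fourier

open Complex

theorem integral_exp_int_mul_I (k : ℤ) :
    ∫ θ in (0)..2 * π, exp (k * θ * I) = if k = 0 then (2 * π : ℂ) else 0 := by
  split_ifs with hk
  · simp [hk]
  · have hkI : (k * I : ℂ) ≠ 0 := mul_ne_zero (Int.cast_ne_zero.mpr hk) I_ne_zero
    simp_rw [mul_right_comm _ _ I]
    rw [integral_exp_mul_complex hkI]
    have : exp (k * I * (2 * π)) = 1 := by
      rw [← exp_int_mul_two_pi_mul_I k]; ring_nf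
    simp [this]

theorem integral_re_mul_exp_mul_exp_neg (c : ℂ) (m n : ℕ) :
    ∫ θ in (0)..2 * π, ((c * exp (m * θ * I)).re : ℂ) * exp (-(n * θ * I)) =
      π * ((if m = n then c else 0) + if m + n = 0 then conj c else 0) := by
  have hsplit : ∀ θ : ℝ, ((c * exp (m * θ * I)).re : ℂ) * exp (-(n * θ * I)) =
      c / 2 * exp (((m : ℤ) - n : ℤ) * θ * I) + conj c / 2 * exp ((-(m + n) : ℤ) * θ * I) := by
    intro θ
    rw [re_eq_add_conj]
    push_cast
    simp only [map_mul, ← exp_conj, conj_ofReal, conj_I, conj_natCast, sub_eq_add_neg, neg_add,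
      add_mul, exp_add, neg_mul, mul_neg, exp_neg]
    ring
  have hint : ∀ k : ℤ, IntervalIntegrable (fun θ : ℝ => exp (k * θ * I)) volume 0 (2 * π) :=
    fun k => (by fun_prop : Continuous fun θ : ℝ => exp (k * θ * I)).intervalIntegrable _ _
  simp_rw [hsplit]
  rw [intervalIntegral.integral_add ((hint _).const_mul _) ((hint _).const_mul _),
    intervalIntegral.integral_const_mul, intervalIntegral.integral_const_mul,
    integral_exp_int_mul_I, integral_exp_int_mul_I]
  simp only [sub_eq_zero, Nat.cast_inj, neg_eq_zero]
  norm_cast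
  split_ifs <;> push_cast <;> ring

theorem integral_re_tsum_mul_exp_mul_exp_neg {c : ℕ → ℂ} (hc : Summable (‖c ·‖)) (n : ℕ) :
    ∫ θ in (0)..2 * π, ((∑' m, (c m * exp (m * θ * I)).re : ℝ) : ℂ) * exp (-(n * θ * I)) =
      π * (c n + if n = 0 then conj (c 0) else 0) := by
  have hbound : ∀ (m : ℕ) (θ : ℝ), |(c m * exp (m * θ * I)).re| ≤ ‖c m‖ := fun m θ => by
    simpa [norm_exp] using abs_re_le_norm (c m * exp (m * θ * I))
  have hterms := intervalIntegral.hasSum_integral_of_dominated_convergence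
    (μ := volume) (a := 0) (b := 2 * π)
    (F := fun m θ => ((c m * exp (m * θ * I)).re : ℂ) * exp (-(n * θ * I)))
    (fun m _ => ‖c m‖) (fun m => (by fun_prop : Continuous _).aestronglyMeasurable)
    (fun m => .of_forall fun θ _ => by
      rw [norm_mul, norm_real, Real.norm_eq_abs, norm_exp]; simpa using hbound m θ)
    (.of_forall fun _ _ => hc) intervalIntegrable_const
    (.of_forall fun θ _ => (hasSum_ofReal.mpr
      (hc.of_norm_bounded (hbound · θ)).hasSum).mul_right _)
  simp only [integral_re_mul_exp_mul_exp_neg] at hterms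
  refine hterms.unique ?_
  convert hasSum_single n (fun m hm => ?_) using 1
  · rcases eq_or_ne n 0 with rfl | hn
    · simp
    · simp [hn]
  · rw [if_neg hm, if_neg (by omega), add_zero, mul_zero]

theorem norm_le_two_mul_re_of_re_tsum_nonneg {c : ℕ → ℂ} (hc : Summable (‖c ·‖))
    (hpos : ∀ θ : ℝ, 0 ≤ ∑' m, (c m * exp (m * θ * I)).re) {n : ℕ} (hn : n ≠ 0) :
    ‖c n‖ ≤ 2 * (c 0).re := by
  set u : ℝ → ℝ := fun θ => ∑' m, (c m * exp (m * θ * I)).re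
  have hcoeff : ∫ θ in (0)..2 * π, (u θ : ℂ) * exp (-(n * θ * I)) = π * c n := by
    simpa only [if_neg hn, add_zero] using integral_re_tsum_mul_exp_mul_exp_neg hc n
  have hmean : ∫ θ in (0)..2 * π, u θ = 2 * π * (c 0).re := by
    have h : ∫ θ in (0)..2 * π, (u θ : ℂ) = π * (c 0 + conj (c 0)) := by
      simpa only [CharP.cast_eq_zero, zero_mul, neg_zero, exp_zero, mul_one, if_true] using
        integral_re_tsum_mul_exp_mul_exp_neg hc 0
    rw [intervalIntegral.integral_ofReal, add_conj] at h
    exact_mod_cast (h.trans (by push_cast; ring) : _ = ((2 * π * (c 0).re : ℝ) : ℂ))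
  have hnorm : ∀ θ : ℝ, ‖(u θ : ℂ) * exp (-(n * θ * I))‖ = u θ := fun θ => by
    have he : ‖exp (-(n * θ * I))‖ = 1 := by simp [norm_exp]
    rw [norm_mul, norm_real, Real.norm_eq_abs, abs_of_nonneg (hpos θ), he, mul_one]
  have key := intervalIntegral.norm_integral_le_integral_norm (μ := volume)
    (f := fun θ => (u θ : ℂ) * exp (-(n * θ * I))) (by positivity : (0 : ℝ) ≤ 2 * π)
  simp only [hcoeff, hnorm, hmean, norm_mul, norm_real, Real.norm_eq_abs,
    abs_of_pos Real.pi_pos] at key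
  nlinarith [Real.pi_pos]

end Fourier

section Slice

/-- For a unit imaginary `I`, the coordinates `(⟪q, 1⟫, ⟪q, I⟫)` of the projection of `q` onto
the slice `ℝ + ℝ I`. -/
def sliceCoeff (I q : ℍ[ℝ]) : ℂ := ⟨q.re, -(I * q).re⟩

variable {I : ℍ[ℝ]}

theorem re_liftAux_mul (hI : I * I = -1) (w : ℂ) (q : ℍ[ℝ]) :
    (Complex.liftAux I hI w * q).re = (w * sliceCoeff I q).re := by
  rw [Complex.liftAux_apply, add_mul, Algebra.algebraMap_eq_smul_one, smul_one_mul, smul_mul_assoc,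
    Quaternion.re_add, Quaternion.re_smul, Quaternion.re_smul, Complex.mul_re, smul_eq_mul,
    smul_eq_mul]
  simp only [sliceCoeff]
  ring

theorem star_liftAux (hI : I * I = -1) (hIre : I.re = 0) (w : ℂ) :
    star (Complex.liftAux I hI w) = Complex.liftAux I hI (conj w) := by
  simp [Complex.liftAux_apply, Quaternion.star_eq_neg.mpr hIre]

theorem norm_liftAux (hI : I * I = -1) (hIre : I.re = 0) (w : ℂ) :
    ‖Complex.liftAux I hI w‖ = ‖w‖ := by
  have h : Quaternion.normSq (Complex.liftAux I hI w) = ‖w‖ ^ 2 := by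
    apply Quaternion.coe_injective
    rw [← Quaternion.self_mul_star, star_liftAux hI hIre, ← map_mul, Complex.mul_conj',
      ← Complex.ofReal_pow, ← Complex.coe_algebraMap, AlgHom.commutes]
    rfl
  rw [Quaternion.normSq_eq_norm_mul_self, ← sq] at h
  exact (pow_left_inj₀ (norm_nonneg _) (norm_nonneg _) two_ne_zero).mp h

theorem norm_sliceCoeff_le (I q : ℍ[ℝ]) : ‖sliceCoeff I q‖ ≤ (1 + ‖I‖) * ‖q‖ := by
  have hre : ∀ x : ℍ[ℝ], |x.re| ≤ ‖x‖ := fun x => by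
    simpa [Quaternion.inner_def] using abs_real_inner_le_norm x 1
  calc ‖sliceCoeff I q‖ ≤ |q.re| + |-(I * q).re| := Complex.norm_le_abs_re_add_abs_im _
    _ = |q.re| + |(I * q).re| := by rw [abs_neg]
    _ ≤ ‖q‖ + ‖I * q‖ := add_le_add (hre q) (hre _)
    _ = (1 + ‖I‖) * ‖q‖ := by rw [norm_mul]; ring

theorem sliceCoeff_one (hIre : I.re = 0) : sliceCoeff I 1 = 1 := by
  apply Complex.ext <;> simp [sliceCoeff, hIre]

theorem mul_self_eq_neg_one_of_re_eq_zero (hIre : I.re = 0) (hI : Quaternion.normSq I = 1) :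
    I * I = -1 :=
  calc I * I = -(star I * I) := by rw [Quaternion.star_eq_neg.mpr hIre, neg_mul, neg_neg]
    _ = -1 := by rw [Quaternion.star_mul_self, hI, Quaternion.coe_one]

theorem exists_norm_sliceCoeff_eq (q : ℍ[ℝ]) :
    ∃ I : ℍ[ℝ], I * I = -1 ∧ I.re = 0 ∧ ‖sliceCoeff I q‖ = ‖q‖ := by
  by_cases h : q.im = 0
  · obtain ⟨r, rfl⟩ : ∃ r : ℝ, q = r :=
      ⟨q.re, by simpa [h] using (Quaternion.re_add_im q).symm⟩
    refine ⟨Quaternion.ofComplex Complex.I, by rw [← map_mul, Complex.I_mul_I, map_neg, map_one],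
      rfl, ?_⟩
    have hr : sliceCoeff (Quaternion.ofComplex Complex.I) r = r :=
      Complex.ext rfl (by simp [sliceCoeff, Quaternion.re_mul])
    rw [hr, Complex.norm_real, Quaternion.norm_coe]
  · set s := ‖q.im‖ with hs
    have hs0 : s ≠ 0 := norm_ne_zero_iff.mpr h
    have hs2 : s ^ 2 = q.imI ^ 2 + q.imJ ^ 2 + q.imK ^ 2 := by
      rw [hs, sq, ← Quaternion.normSq_eq_norm_mul_self, Quaternion.normSq_def']
      simp
    have hIq : (s⁻¹ • q.im * q).re = -s := by
      rw [smul_mul_assoc, Quaternion.re_smul, smul_eq_mul, Quaternion.re_mul]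
      simp only [Quaternion.re_im, Quaternion.imI_im, Quaternion.imJ_im, Quaternion.imK_im]
      field_simp
      linear_combination hs2
    refine ⟨s⁻¹ • q.im, mul_self_eq_neg_one_of_re_eq_zero (by simp) ?_, by simp, ?_⟩
    · rw [Quaternion.normSq_smul, Quaternion.normSq_eq_norm_mul_self, ← hs]
      field_simp
    · rw [← sq_eq_sq₀ (norm_nonneg _) (norm_nonneg _), Complex.sq_norm, Complex.normSq_apply, sq,
        ← Quaternion.normSq_eq_norm_mul_self, Quaternion.normSq_def']
      simp only [sliceCoeff, hIq, neg_neg]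
      linear_combination hs2

end Slice

section PositiveRealPart

variable {a : ℕ → ℍ[ℝ]} {I : ℍ[ℝ]}

theorem summable_pow_mul_norm (hconv : ∀ p : ℍ[ℝ], ‖p‖ < 1 → Summable fun n => p ^ n * a n)
    {r : ℝ} (hr0 : 0 ≤ r) (hr1 : r < 1) : Summable fun n => r ^ n * ‖a n‖ := by
  have hr : ‖(r : ℍ[ℝ])‖ < 1 := by rwa [Quaternion.norm_coe, Real.norm_eq_abs, abs_of_nonneg hr0]
  simpa [abs_of_nonneg hr0] using summable_norm_iff.mpr (hconv r hr)

theorem re_tsum_liftAux_pow_mul (hconv : ∀ p : ℍ[ℝ], ‖p‖ < 1 → Summable fun n => p ^ n * a n)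
    (hI : I * I = -1) (hIre : I.re = 0) {w : ℂ} (hw : ‖w‖ < 1) :
    (∑' n, Complex.liftAux I hI w ^ n * a n).re = ∑' n, (w ^ n * sliceCoeff I (a n)).re := by
  have hsum : HasSum (fun n => (Complex.liftAux I hI w ^ n * a n).re)
      (∑' n, Complex.liftAux I hI w ^ n * a n).re :=
    (hconv _ (by rwa [norm_liftAux hI hIre])).hasSum.map
      (show ℍ[ℝ] →ₗ[ℝ] ℝ from QuaternionAlgebra.reₗ _ _ _) Quaternion.continuous_re
  simp only [← map_pow, re_liftAux_mul] at hsum ⊢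
  exact hsum.tsum_eq.symm

theorem pow_mul_norm_sliceCoeff_le_two (ha0 : a 0 = 1)
    (hconv : ∀ p : ℍ[ℝ], ‖p‖ < 1 → Summable fun n => p ^ n * a n)
    (hpos : ∀ p : ℍ[ℝ], ‖p‖ < 1 → 0 ≤ (∑' n, p ^ n * a n).re)
    (hI : I * I = -1) (hIre : I.re = 0) {r : ℝ} (hr0 : 0 ≤ r) (hr1 : r < 1) {n : ℕ}
    (hn : n ≠ 0) : r ^ n * ‖sliceCoeff I (a n)‖ ≤ 2 := by
  set c : ℕ → ℂ := fun m => (r : ℂ) ^ m * sliceCoeff I (a m)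
  have hc_norm : ∀ m, ‖c m‖ = r ^ m * ‖sliceCoeff I (a m)‖ := fun m => by
    simp [c, abs_of_nonneg hr0]
  have hc : Summable (‖c ·‖) := by
    refine ((summable_pow_mul_norm hconv hr0 hr1).mul_left (1 + ‖I‖)).of_nonneg_of_le
      (fun _ => norm_nonneg _) fun m => ?_
    rw [hc_norm, mul_left_comm]
    gcongr
    exact norm_sliceCoeff_le _ _
  have hc_pos : ∀ θ : ℝ, 0 ≤ ∑' m, (c m * Complex.exp (m * θ * Complex.I)).re := fun θ => by
    have hw : ‖(r : ℂ) * Complex.exp (θ * Complex.I)‖ < 1 := by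
      rwa [norm_mul, Complex.norm_exp_ofReal_mul_I, mul_one, Complex.norm_real, Real.norm_eq_abs,
        abs_of_nonneg hr0]
    convert hpos _ (by rwa [norm_liftAux hI hIre]) using 1
    rw [re_tsum_liftAux_pow_mul hconv hI hIre hw]
    congr 1 with m
    rw [mul_pow, ← Complex.exp_nat_mul]
    simp only [c]
    ring_nf
  have hc0 : c 0 = 1 := by simp [c, ha0, sliceCoeff_one hIre]
  simpa [hc_norm, hc0] using norm_le_two_mul_re_of_re_tsum_nonneg hc hc_pos hn

theorem norm_sliceCoeff_le_two (ha0 : a 0 = 1)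
    (hconv : ∀ p : ℍ[ℝ], ‖p‖ < 1 → Summable fun n => p ^ n * a n)
    (hpos : ∀ p : ℍ[ℝ], ‖p‖ < 1 → 0 ≤ (∑' n, p ^ n * a n).re)
    (hI : I * I = -1) (hIre : I.re = 0) {n : ℕ} (hn : n ≠ 0) : ‖sliceCoeff I (a n)‖ ≤ 2 := by
  have hlim : Tendsto (fun r : ℝ => r ^ n * ‖sliceCoeff I (a n)‖) (𝓝[<] 1)
      (𝓝 ‖sliceCoeff I (a n)‖) := by
    exact ((by fun_prop : Continuous fun r : ℝ => r ^ n * ‖sliceCoeff I (a n)‖).tendsto' 1 _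
      (by simp)).mono_left nhdsWithin_le_nhds
  refine le_of_tendsto hlim ?_
  filter_upwards [Ioo_mem_nhdsLT zero_lt_one] with r hr
  exact pow_mul_norm_sliceCoeff_le_two ha0 hconv hpos hI hIre hr.1.le hr.2 hn

end PositiveRealPart

/-- boundedness of the coefficients of a slice hyperholomorphic
function with positive real part and f(0)=1. -/
theorem coefficients_bounded
    (a : ℕ → Hq) (ha0 : a 0 = 1)
    (hconv : ∀ p : Hq, ‖p‖ < 1 → Summable fun n : ℕ => p ^ n * a n)
    (f : Hq → Hq) (hf : ∀ p : Hq, f p = ∑' n : ℕ, p ^ n * a n)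
    (hpos : ∀ p : Hq, ‖p‖ < 1 → 0 ≤ (f p).re) :
    ∃ k : ℝ, ∀ n : ℕ, ‖a n‖ ≤ k := by
  refine ⟨2, fun n => ?_⟩
  rcases eq_or_ne n 0 with rfl | hn
  · simp [ha0]
  obtain ⟨I, hI, hIre, hnorm⟩ := exists_norm_sliceCoeff_eq (a n)
  rw [← hnorm]
  exact norm_sliceCoeff_le_two ha0 hconv (fun p hp => hf p ▸ hpos p hp) hI hIre hn
end
end
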